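/- arXiv:2604.06686 — 3 statements merged into one kernel-verified Lean document; each statement's English description precedes it below -/
import Mathlib

section
/- Let X be a quasi-median graph, S a sector delimited by a hyperplane J, and Y₁, …, Yₙ pairwise intersecting gated subgraphs of X. If the intersection Y₁ ∩ ⋯ ∩ Yₙ is contained in S, then Yᵢ ⊆ S for some i. -/
open SimpleGraph

variable {V : Type*}

/-- Triangle condition of weak modularity. -/
def TriangleCond (X : SimpleGraph V) : Prop :=
  ∀ o x y : V, X.Adj x y → X.dist o x = X.dist o y →
    ∃ w : V, X.Adj w x ∧ X.Adj w y ∧ X.dist o w + 1 = X.dist o x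

/-- Quadrangle condition of weak modularity. -/
def QuadCond (X : SimpleGraph V) : Prop :=
  ∀ o x y z : V, X.Adj z x → X.Adj z y → X.dist x y = 2 →
    X.dist o z = X.dist o x + 1 → X.dist o z = X.dist o y + 1 →
    ∃ w : V, X.Adj w x ∧ X.Adj w y ∧ X.dist o w + 2 = X.dist o z

/-- No induced copy of the complete bipartite graph `K_{2,3}`. -/
def NoInducedK23 (X : SimpleGraph V) : Prop :=
  ¬ ∃ a b x y z : V, a ≠ b ∧ x ≠ y ∧ y ≠ z ∧ x ≠ z ∧
    X.Adj a x ∧ X.Adj a y ∧ X.Adj a z ∧ X.Adj b x ∧ X.Adj b y ∧ X.Adj b z ∧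
    ¬ X.Adj a b ∧ ¬ X.Adj x y ∧ ¬ X.Adj y z ∧ ¬ X.Adj x z

/-- No induced copy of `K₄` minus an edge. -/
def NoInducedK4minus (X : SimpleGraph V) : Prop :=
  ¬ ∃ a b c d : V, X.Adj a b ∧ X.Adj a c ∧ X.Adj a d ∧ X.Adj b c ∧ X.Adj b d ∧
    c ≠ d ∧ ¬ X.Adj c d

/-- A quasi-median graph: a connected weakly modular graph with no induced
`K_{2,3}` and no induced `K₄⁻`. -/
def QuasiMedian (X : SimpleGraph V) : Prop :=
  X.Connected ∧ TriangleCond X ∧ QuadCond X ∧ NoInducedK23 X ∧ NoInducedK4minus X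

/-- `m` lies on a geodesic from `a` to `b`. -/
def InInterval (X : SimpleGraph V) (a m b : V) : Prop :=
  X.dist a m + X.dist m b = X.dist a b

/-- `m` is a median of the triple `a, b, c`. -/
def IsMedianOf (X : SimpleGraph V) (m a b c : V) : Prop :=
  InInterval X a m b ∧ InInterval X b m c ∧ InInterval X a m c

/-- A median graph: connected, and every triple of vertices has a unique median. -/
def MedianGraph (X : SimpleGraph V) : Prop :=
  X.Connected ∧ ∀ a b c : V, ∃! m : V, IsMedianOf X m a b c

/-- The elementary relation on edges generating hyperplanes: two edges of a common
triangle, or opposite edges of an induced 4-cycle. -/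
def EdgeRel (X : SimpleGraph V) (e f : Sym2 V) : Prop :=
  (∃ a b c : V, X.Adj a b ∧ X.Adj b c ∧ X.Adj a c ∧ e = s(a, b) ∧ f = s(b, c)) ∨
  (∃ a b c d : V, X.Adj a b ∧ X.Adj b c ∧ X.Adj c d ∧ X.Adj d a ∧
    a ≠ c ∧ ¬ X.Adj a c ∧ b ≠ d ∧ ¬ X.Adj b d ∧ e = s(a, b) ∧ f = s(c, d))

/-- A hyperplane: an equivalence class of edges under the reflexive-transitive
closure of `EdgeRel`. -/
def IsHyperplane (X : SimpleGraph V) (J : Set (Sym2 V)) : Prop :=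
  ∃ e ∈ X.edgeSet, J = {f | Relation.ReflTransGen (EdgeRel X) e f}

/-- The hyperplane `J` separates `x` and `y`. -/
def SeparatesPts (X : SimpleGraph V) (J : Set (Sym2 V)) (x y : V) : Prop :=
  ¬ (X.deleteEdges J).Reachable x y

/-- A sector delimited by `J`: a connected component of `X` minus the edges of `J`. -/
def IsSectorOf (X : SimpleGraph V) (J : Set (Sym2 V)) (S : Set V) : Prop :=
  ∃ v : V, S = {w | (X.deleteEdges J).Reachable v w}

/-- A gated subset of vertices. -/
def IsGated (X : SimpleGraph V) (Y : Set V) : Prop :=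
  Y.Nonempty ∧ ∀ x : V, ∃ y ∈ Y, ∀ z ∈ Y, X.dist x z = X.dist x y + X.dist y z

/-- The gated hull of a set of vertices. -/
def GatedHull (X : SimpleGraph V) (A : Set V) : Set V :=
  ⋂₀ {Y : Set V | IsGated X Y ∧ A ⊆ Y}

/-- A polytope: the gated hull of a non-empty finite set of vertices. -/
def IsPolytope (X : SimpleGraph V) (P : Set V) : Prop :=
  ∃ A : Finset V, A.Nonempty ∧ P = GatedHull X (A : Set V)

/-- `HypOf X Y`: the hyperplanes separating two vertices of `Y` (the hyperplanes
crossing `Y`). -/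
def HypOf (X : SimpleGraph V) (Y : Set V) : Set (Set (Sym2 V)) :=
  {J | IsHyperplane X J ∧ ∃ a ∈ Y, ∃ b ∈ Y, SeparatesPts X J a b}

/-- The hyperplanes separating `A` from `B` (placing them in two distinct sectors). -/
def SepHyp (X : SimpleGraph V) (A B : Set V) : Set (Set (Sym2 V)) :=
  {J | IsHyperplane X J ∧ ∃ S T : Set V, IsSectorOf X J S ∧ IsSectorOf X J T ∧
    S ≠ T ∧ A ⊆ S ∧ B ⊆ T}

/-- The covering relation for polytopes: `P ⊊ Q` with no polytope strictly between. -/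
def PolyCover (X : SimpleGraph V) (P Q : Set V) : Prop :=
  IsPolytope X P ∧ IsPolytope X Q ∧ P ⊂ Q ∧
    ¬ ∃ R : Set V, IsPolytope X R ∧ P ⊂ R ∧ R ⊂ Q

abbrev PolyVert (X : SimpleGraph V) := {P : Set V // IsPolytope X P}

/-- The graph of polytopes: the covering graph of the inclusion poset of polytopes. -/
def PolyGraph (X : SimpleGraph V) : SimpleGraph (PolyVert X) where
  Adj P Q := PolyCover X P.val Q.val ∨ PolyCover X Q.val P.val
  symm := by constructor; intro P Q h; exact h.symm
  loopless := by constructor; intro P h; rcases h with h | h <;> exact (ssubset_irrefl P.val) h.2.2.1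

/-- Two hyperplanes are transverse: there is an induced 4-cycle whose two pairs of
opposite edges belong respectively to the two hyperplanes. -/
def Transverse (X : SimpleGraph V) (J₁ J₂ : Set (Sym2 V)) : Prop :=
  ∃ a b c d : V, X.Adj a b ∧ X.Adj b c ∧ X.Adj c d ∧ X.Adj d a ∧
    a ≠ c ∧ ¬ X.Adj a c ∧ b ≠ d ∧ ¬ X.Adj b d ∧
    s(a, b) ∈ J₁ ∧ s(c, d) ∈ J₁ ∧ s(b, c) ∈ J₂ ∧ s(d, a) ∈ J₂

/-- A prism: a polytope whose crossing hyperplanes are pairwise transverse (this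
characterises the gated subgraphs decomposing as finite products of cliques). -/
def IsPrism (X : SimpleGraph V) (P : Set V) : Prop :=
  IsPolytope X P ∧ ∀ J₁ ∈ HypOf X P, ∀ J₂ ∈ HypOf X P, J₁ ≠ J₂ → Transverse X J₁ J₂

/-- The covering relation for prisms. -/
def PrismCover (X : SimpleGraph V) (P Q : Set V) : Prop :=
  IsPrism X P ∧ IsPrism X Q ∧ P ⊂ Q ∧
    ¬ ∃ R : Set V, IsPrism X R ∧ P ⊂ R ∧ R ⊂ Q

abbrev PrismVert (X : SimpleGraph V) := {P : Set V // IsPrism X P}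

/-- The graph of prisms. -/
def PrismGraph (X : SimpleGraph V) : SimpleGraph (PrismVert X) where
  Adj P Q := PrismCover X P.val Q.val ∨ PrismCover X Q.val P.val
  symm := by constructor; intro P Q h; exact h.symm
  loopless := by constructor; intro P h; rcases h with h | h <;> exact (ssubset_irrefl P.val) h.2.2.1

/-- A convex set of vertices: closed under taking points on geodesics. -/
def IsConvexSet (X : SimpleGraph V) (Y : Set V) : Prop :=
  ∀ a ∈ Y, ∀ b ∈ Y, ∀ m : V, InInterval X a m b → m ∈ Y

/-- The convex hull of a set of vertices. -/
def ConvHull (X : SimpleGraph V) (A : Set V) : Set V :=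
  ⋂₀ {Y : Set V | IsConvexSet X Y ∧ A ⊆ Y}

/-- The subgraph of `X` induced on `Y` (kept on the same vertex set). -/
def RestrictTo (X : SimpleGraph V) (Y : Set V) : SimpleGraph V where
  Adj a b := X.Adj a b ∧ a ∈ Y ∧ b ∈ Y
  symm := by constructor; intro a b h; exact ⟨h.1.symm, h.2.2, h.2.1⟩
  loopless := by constructor; intro a h; exact X.irrefl h.1


/-!
Take an edge `uu'` of `J` with `u ∈ S`, the clique `K` it spans, and the gate map `p` onto `K`.
An edge of `X` lies in `J` exactly when its endpoints have distinct gates: one direction by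
induction on the distance to `K`, pushing the edge towards `K` across induced squares; the other
because having distinct gates is preserved by the triangles and induced squares generating `J`,
which is where the absence of induced `K_{2,3}` and `K₄⁻` enters. Hence `S` is the fibre
`p⁻¹(u)`, and the complement of `S` is convex because a geodesic crosses `J` at most once. If no
`Yᵢ` were contained in `S`, each would meet this convex set, and the Helly property of gated sets,
with one convex set added, would give a point of `⋂ Yᵢ` outside `S`.
-/

namespace SimpleGraph

variable {G : SimpleGraph V} {u v a b c t : V}

lemma Adj.dist_le_dist_add_one (hab : G.Adj a b) (c : V) : G.dist a c ≤ G.dist b c + 1 := by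
  rw [dist_comm, dist_comm (u := b)]
  rcases hab.symm.diff_dist_adj (u := c) with h | h | h <;> omega

lemma dist_eq_two_of_adj_of_adj (hab : G.Adj a b) (hbc : G.Adj b c) (hac : a ≠ c)
    (hnac : ¬ G.Adj a c) : G.dist a c = 2 := by
  have hlt := (hab.reachable.trans hbc.reachable).one_lt_dist_of_ne_of_not_adj hac hnac
  have hle := dist_le (Walk.cons hab (Walk.cons hbc Walk.nil))
  simp only [Walk.length_cons, Walk.length_nil] at hle
  omega

lemma exists_adj_dist_eq_of_dist_eq_add_one {k : ℕ} (h : G.dist a t = k + 1) :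
    ∃ b, G.Adj a b ∧ G.dist b t = k := by
  obtain ⟨w, hw⟩ :=
    (Reachable.of_dist_ne_zero (by omega : G.dist a t ≠ 0)).exists_walk_length_eq_dist
  cases w with
  | nil => simp at h
  | @cons _ b _ hab w =>
    refine ⟨b, hab, le_antisymm ?_ ?_⟩
    · have := dist_le w
      simp only [Walk.length_cons] at hw
      omega
    · have := hab.dist_le_dist_add_one t
      omega

lemma Walk.dist_getVert_le (w : G.Walk u v) {i j : ℕ} (hij : i ≤ j) :
    G.dist (w.getVert i) (w.getVert j) ≤ j - i := by
  have hj : w.getVert j = (w.drop i).getVert (j - i) := by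
    rw [drop_getVert, Nat.add_sub_cancel' hij]
  rw [hj]
  exact (dist_le _).trans (by rw [take_length]; exact min_le_left _ _)

lemma Walk.dist_getVert_eq_of_length_eq_dist (w : G.Walk u v) (hw : w.length = G.dist u v)
    {i j : ℕ} (hij : i ≤ j) (hj : j ≤ w.length) :
    G.dist (w.getVert i) (w.getVert j) = j - i := by
  have h₁ := w.dist_getVert_le (Nat.zero_le i)
  have h₂ := w.dist_getVert_le hij
  have h₃ := w.dist_getVert_le hj
  rw [getVert_zero] at h₁
  rw [getVert_length] at h₃
  have t₁ := (w.take i).reachable.dist_triangle_left v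
  have t₂ := (w.drop j).reachable.dist_triangle_right (w.getVert i)
  omega

lemma Connected.exists_adj_mem_of_not_reachable_deleteEdges (hG : G.Connected)
    {J : Set (Sym2 V)} (h : ¬ (G.deleteEdges J).Reachable u v) :
    ∃ a b, G.Adj a b ∧ (G.deleteEdges J).Reachable u a ∧ s(a, b) ∈ J := by
  obtain ⟨d, -, hd₁, hd₂⟩ := (hG u v).some.exists_boundary_dart
    {x | (G.deleteEdges J).Reachable u x} (Reachable.refl u) h
  refine ⟨d.fst, d.snd, d.adj, hd₁, ?_⟩
  by_contra hd
  exact hd₂ (hd₁.trans (Adj.reachable ((deleteEdges_adj ..).2 ⟨d.adj, hd⟩)))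

end SimpleGraph

lemma Nat.exists_lt_apply_ne_apply_succ {α : Type*} (f : ℕ → α) {n : ℕ} (h : f 0 ≠ f n) :
    ∃ i < n, f i ≠ f (i + 1) := by
  induction n with
  | zero => exact absurd rfl h
  | succ n ih =>
    by_cases hn : f 0 = f n
    · exact ⟨n, n.lt_succ_self, hn ▸ h⟩
    · obtain ⟨i, hi, hne⟩ := ih hn
      exact ⟨i, hi.trans n.lt_succ_self, hne⟩

variable {X : SimpleGraph V}

lemma IsGated.isConvexSet (hG : X.Connected) {Y : Set V} (hY : IsGated X Y) :
    IsConvexSet X Y := by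
  intro a ha b hb m hm
  obtain ⟨g, hg, hgate⟩ := hY.2 m
  have hag := hgate a ha
  have hbg := hgate b hb
  have htri : X.dist a b ≤ X.dist a g + X.dist g b := hG.dist_triangle
  rw [InInterval, dist_comm (u := a) (v := m)] at hm
  rw [dist_comm (u := a) (v := g)] at htri
  rwa [(hG.dist_eq_zero_iff).1 (by omega : X.dist m g = 0)]

lemma IsGated.exists_mem_inter_inter {A B C : Set V} (hA : IsGated X A) (hB : IsConvexSet X B)
    (hC : IsConvexSet X C) (hAB : (A ∩ B).Nonempty) (hAC : (A ∩ C).Nonempty)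
    (hBC : (B ∩ C).Nonempty) : (A ∩ B ∩ C).Nonempty := by
  obtain ⟨x, hxB, hxC⟩ := hBC
  obtain ⟨g, hgA, hgate⟩ := hA.2 x
  obtain ⟨b, hbA, hbB⟩ := hAB
  obtain ⟨c, hcA, hcC⟩ := hAC
  exact ⟨g, ⟨hgA, hB x hxB b hbB g (hgate b hbA).symm⟩, hC x hxC c hcC g (hgate c hcA).symm⟩

lemma IsGated.inter (hG : X.Connected) {A B : Set V} (hA : IsGated X A) (hB : IsGated X B)
    (hAB : (A ∩ B).Nonempty) : IsGated X (A ∩ B) := by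
  refine ⟨hAB, fun x => ?_⟩
  obtain ⟨a, haA, hxa⟩ := hA.2 x
  obtain ⟨g, hgB, hag⟩ := hB.2 a
  obtain ⟨c, hcA, hcB⟩ := hAB
  have hgA : g ∈ A := hA.isConvexSet hG a haA c hcA g (hag c hcB).symm
  refine ⟨g, ⟨hgA, hgB⟩, fun z hz => ?_⟩
  rw [hxa z hz.1, hag z hz.2, hxa g hgA]
  ring

theorem nonempty_iInter_inter_of_isGated (hG : X.Connected) {n : ℕ} {Y : Fin (n + 1) → Set V}
    (hY : ∀ i, IsGated X (Y i)) (hpair : ∀ i j, (Y i ∩ Y j).Nonempty) {C : Set V}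
    (hC : IsConvexSet X C) (hYC : ∀ i, (Y i ∩ C).Nonempty) : ((⋂ i, Y i) ∩ C).Nonempty := by
  induction n with
  | zero =>
    obtain ⟨x, hxY, hxC⟩ := hYC 0
    exact ⟨x, Set.mem_iInter.2 fun i => by rwa [Fin.fin_one_eq_zero i], hxC⟩
  | succ n ih =>
    set L := Y (Fin.last (n + 1))
    have hLconv (i : Fin (n + 1)) := (hY i.castSucc).isConvexSet hG
    obtain ⟨x, hxZ, hxC⟩ := ih (Y := fun i => Y i.castSucc ∩ L)
      (fun i => (hY _).inter hG (hY _) (hpair _ _))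
      (fun i j => by
        obtain ⟨z, ⟨hzL, hzi⟩, hzj⟩ := (hY (Fin.last _)).exists_mem_inter_inter (hLconv i)
          (hLconv j) (Set.inter_comm _ _ ▸ hpair _ _) (Set.inter_comm _ _ ▸ hpair _ _) (hpair _ _)
        exact ⟨z, ⟨hzi, hzL⟩, hzj, hzL⟩)
      (fun i => by
        obtain ⟨z, ⟨hzL, hzi⟩, hzC⟩ := (hY (Fin.last _)).exists_mem_inter_inter (hLconv i) hC
          (Set.inter_comm _ _ ▸ hpair _ _) (hYC _) (hYC _)
        exact ⟨z, ⟨hzi, hzL⟩, hzC⟩)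
    refine ⟨x, Set.mem_iInter.2 fun j => Fin.lastCases ?_ (fun i => ?_) j, hxC⟩
    · exact (Set.mem_iInter.1 hxZ 0).2
    · exact (Set.mem_iInter.1 hxZ i).1

lemma NoInducedK4minus.adj (h : NoInducedK4minus X) {a b c d : V} (hab : X.Adj a b)
    (hac : X.Adj a c) (had : X.Adj a d) (hbc : X.Adj b c) (hbd : X.Adj b d) (hcd : c ≠ d) :
    X.Adj c d :=
  not_not.1 fun hn => h ⟨a, b, c, d, hab, hac, had, hbc, hbd, hcd, hn⟩

/-- In a graph without induced `K₄⁻`, the unique maximal clique containing the edge `uv`. -/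
def edgeClique (X : SimpleGraph V) (u v : V) : Set V :=
  {w | w = u ∨ w = v ∨ (X.Adj u w ∧ X.Adj v w)}

section EdgeClique

variable {u v : V}

lemma left_mem_edgeClique : u ∈ edgeClique X u v := Or.inl rfl

lemma right_mem_edgeClique : v ∈ edgeClique X u v := Or.inr (Or.inl rfl)

lemma NoInducedK4minus.isClique_edgeClique (hK4 : NoInducedK4minus X) (huv : X.Adj u v) :
    X.IsClique (edgeClique X u v) := by
  rintro z₁ (rfl | rfl | ⟨h₁u, h₁v⟩) z₂ (rfl | rfl | ⟨h₂u, h₂v⟩) hne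
  any_goals first
    | exact absurd rfl hne
    | assumption
    | exact huv.symm
    | (symm; assumption)
  exact hK4.adj huv h₁u h₂u h₁v h₂v hne

lemma NoInducedK4minus.mem_edgeClique_of_adj_of_adj (hK4 : NoInducedK4minus X)
    (huv : X.Adj u v) {z₁ z₂ w : V} (hz₁ : z₁ ∈ edgeClique X u v) (hz₂ : z₂ ∈ edgeClique X u v)
    (hz : z₁ ≠ z₂) (hwz₁ : X.Adj w z₁) (hwz₂ : X.Adj w z₂) : w ∈ edgeClique X u v := by
  have hK := hK4.isClique_edgeClique huv
  have hadj : ∀ y ∈ edgeClique X u v, y ≠ w → X.Adj y w := by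
    intro y hy hyw
    by_cases hy₁ : y = z₁
    · exact hy₁ ▸ hwz₁.symm
    by_cases hy₂ : y = z₂
    · exact hy₂ ▸ hwz₂.symm
    exact hK4.adj (hK hz₁ hz₂ hz) (hK hz₁ hy (Ne.symm hy₁)) hwz₁.symm (hK hz₂ hy (Ne.symm hy₂))
      hwz₂.symm hyw
  by_cases hwu : w = u
  · exact Or.inl hwu
  by_cases hwv : w = v
  · exact Or.inr (Or.inl hwv)
  exact Or.inr (Or.inr ⟨hadj u left_mem_edgeClique (Ne.symm hwu),
    hadj v right_mem_edgeClique (Ne.symm hwv)⟩)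

/-- The gate of `x` is a vertex of the clique nearest to `x`: by the triangle condition, two
equally near adjacent vertices would have a common neighbour nearer still, and it lies in the
clique. -/
lemma QuasiMedian.isGated_edgeClique (hX : QuasiMedian X) (huv : X.Adj u v) :
    IsGated X (edgeClique X u v) := by
  obtain ⟨-, htri, -, -, hK4⟩ := hX
  have hK := hK4.isClique_edgeClique huv
  refine ⟨⟨u, left_mem_edgeClique⟩, fun x => ?_⟩
  set y := Function.argminOn (X.dist x) (edgeClique X u v) ⟨u, left_mem_edgeClique⟩
  have hy : y ∈ edgeClique X u v := Function.argminOn_mem _ _ _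
  refine ⟨y, hy, fun z hz => ?_⟩
  obtain rfl | hzy := eq_or_ne z y
  · simp
  have hyz := hK hy hz hzy.symm
  have hmin : X.dist x y ≤ X.dist x z := Function.argminOn_le _ _ hz
  have hle : X.dist x z ≤ X.dist x y + 1 := by
    rw [dist_comm, dist_comm (u := x)]
    exact hyz.symm.dist_le_dist_add_one x
  rw [dist_eq_one_iff_adj.2 hyz]
  refine (eq_or_lt_of_le hle).resolve_right fun hlt => ?_
  obtain ⟨w, hwy, hwz, hxw⟩ := htri x y z hyz (by omega)
  have hw := hK4.mem_edgeClique_of_adj_of_adj huv hy hz hzy.symm hwy hwz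
  have : X.dist x y ≤ X.dist x w := Function.argminOn_le _ _ hw
  omega

end EdgeClique

namespace QuasiMedian

variable (hX : QuasiMedian X) {o x y z : V}
include hX

lemma triangle (hxy : X.Adj x y) (h : X.dist x o = X.dist y o) :
    ∃ w, X.Adj w x ∧ X.Adj w y ∧ X.dist w o + 1 = X.dist x o := by
  obtain ⟨w, hwx, hwy, hw⟩ := hX.2.1 o x y hxy (by rwa [dist_comm, dist_comm (u := o)])
  exact ⟨w, hwx, hwy, by rwa [dist_comm, dist_comm (u := o)] at hw⟩

lemma quadrangle (hyx : X.Adj y x) (hyz : X.Adj y z) (hxz : X.dist x z = 2)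
    (hx : X.dist y o = X.dist x o + 1) (hz : X.dist y o = X.dist z o + 1) :
    ∃ w, X.Adj w x ∧ X.Adj w z ∧ X.dist w o + 2 = X.dist y o := by
  obtain ⟨w, hwx, hwz, hw⟩ := hX.2.2.1 o x z y hyx hyz hxz
    (by rwa [dist_comm, dist_comm (u := o)]) (by rwa [dist_comm, dist_comm (u := o)])
  exact ⟨w, hwx, hwz, by rwa [dist_comm, dist_comm (u := o)] at hw⟩

end QuasiMedian

structure IsGateMap (X : SimpleGraph V) (K : Set V) (p : V → V) : Prop where
  isClique : X.IsClique K
  mem : ∀ x, p x ∈ K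
  dist_eq : ∀ x, ∀ z ∈ K, X.dist x z = X.dist x (p x) + X.dist (p x) z

lemma IsGated.exists_isGateMap {K : Set V} (hK : IsGated X K) (hc : X.IsClique K) :
    ∃ p, IsGateMap X K p := by
  choose p hp using hK.2
  exact ⟨p, hc, fun x => (hp x).1, fun x => (hp x).2⟩

namespace IsGateMap

variable {K : Set V} {p : V → V} (hp : IsGateMap X K p) {x y z : V}
include hp

lemma dist_apply_le (hz : z ∈ K) : X.dist x (p x) ≤ X.dist x z := by
  have := hp.dist_eq x z hz
  omega

lemma dist_eq_add_one (hz : z ∈ K) (hne : z ≠ p x) : X.dist x z = X.dist x (p x) + 1 := by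
  rw [hp.dist_eq x z hz, dist_eq_one_iff_adj.2 (hp.isClique (hp.mem x) hz hne.symm)]

lemma apply_eq_of_dist_le (hz : z ∈ K) (h : X.dist x z ≤ X.dist x (p x)) : p x = z := by
  by_contra hne
  have := hp.dist_eq_add_one hz (Ne.symm hne)
  omega

lemma apply_eq_of_dist_lt {z' : V} (hz : z ∈ K) (hz' : z' ∈ K)
    (h : X.dist x z < X.dist x z') : p x = z := by
  refine hp.apply_eq_of_dist_le hz ?_
  obtain rfl | hne := eq_or_ne z' (p x)
  · omega
  · have := hp.dist_eq_add_one hz' hne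
    omega

lemma apply_of_mem (hz : z ∈ K) : p z = z :=
  hp.apply_eq_of_dist_le hz (by simp)

lemma dist_apply_le_of_adj (hxy : X.Adj x y) : X.dist x (p x) ≤ X.dist y (p y) + 1 :=
  (hp.dist_apply_le (hp.mem y)).trans (hxy.dist_le_dist_add_one _)

lemma dist_apply_eq_of_adj (hxy : X.Adj x y) (hne : p x ≠ p y) :
    X.dist x (p x) = X.dist y (p y) := by
  have h₁ := hp.dist_eq_add_one (x := x) (hp.mem y) hne.symm
  have h₂ := hp.dist_eq_add_one (x := y) (hp.mem x) hne
  have h₃ := hxy.dist_le_dist_add_one (p y)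
  have h₄ := hxy.symm.dist_le_dist_add_one (p x)
  omega

lemma not_adj_of_dist_apply_ne (hne : p x ≠ p y) (hd : X.dist x (p x) ≠ X.dist y (p y)) :
    ¬ X.Adj x y :=
  fun hxy => hd (hp.dist_apply_eq_of_adj hxy hne)

end IsGateMap

def IsInducedSquare (X : SimpleGraph V) (a b c d : V) : Prop :=
  X.Adj a b ∧ X.Adj b c ∧ X.Adj c d ∧ X.Adj d a ∧ a ≠ c ∧ ¬ X.Adj a c ∧ b ≠ d ∧ ¬ X.Adj b d

lemma IsInducedSquare.edgeRel {a b c d : V} (h : IsInducedSquare X a b c d) :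
    EdgeRel X s(a, b) s(c, d) := by
  obtain ⟨hab, hbc, hcd, hda, hac, hnac, hbd, hnbd⟩ := h
  exact Or.inr ⟨a, b, c, d, hab, hbc, hcd, hda, hac, hnac, hbd, hnbd, rfl, rfl⟩

lemma IsInducedSquare.reflect {a b c d : V} (h : IsInducedSquare X a b c d) :
    IsInducedSquare X b a d c := by
  obtain ⟨hab, hbc, hcd, hda, hac, hnac, hbd, hnbd⟩ := h
  exact ⟨hab.symm, hda.symm, hcd.symm, hbc.symm, hbd, hnbd, hac, hnac⟩

namespace IsGateMap

variable {K : Set V} {p : V → V} (hp : IsGateMap X K p) (hX : QuasiMedian X) {x y z : V}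
include hp hX

lemma apply_ne_of_triangle (hxy : X.Adj x y) (hne : p x ≠ p y) (hzx : X.Adj z x)
    (hzy : X.Adj z y) : p z ≠ p x := by
  intro hzx'
  have hxy' := hp.dist_apply_eq_of_adj hxy hne
  have hyx := hp.dist_eq_add_one (x := y) (hp.mem x) hne
  have hz : X.dist z (p x) = X.dist x (p x) := by
    have := hp.dist_eq_add_one (x := z) (hp.mem y) (hzx' ▸ hne.symm)
    have := hzy.dist_le_dist_add_one (p y)
    have := hzy.symm.dist_le_dist_add_one (p x)
    rw [hzx'] at *
    omega
  obtain ⟨k, hk⟩ : ∃ k, X.dist x (p x) = k + 1 := Nat.exists_eq_succ_of_ne_zero fun h0 =>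
    hzx.ne (((hX.1.dist_eq_zero_iff).1 (hz.trans h0)).trans ((hX.1.dist_eq_zero_iff).1 h0).symm)
  -- A common neighbour of `x` and `z` nearer to `p x` is adjacent to `y` (no induced `K₄⁻`),
  -- which brings `y` too close to `p x`.
  obtain ⟨w, hwx, hwz, hw⟩ := hX.triangle (o := p x) hzx.symm (by omega)
  have hwy : w ≠ y := by rintro rfl; omega
  have := (hX.2.2.2.2.adj hzx.symm hwx.symm hxy hwz.symm hzy hwy).symm.dist_le_dist_add_one (p x)
  omega

lemma exists_adj_adj_apply_eq (hxy : X.Adj x y) (hne : p x ≠ p y) {q : V} (hq : q ∈ K)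
    (hqx : q ≠ p x) (hqy : q ≠ p y) : ∃ m, X.Adj m x ∧ X.Adj m y ∧ p m = q := by
  have h₁ := hp.dist_eq_add_one (x := x) hq hqx
  have h₂ := hp.dist_eq_add_one (x := y) hq hqy
  have hk := hp.dist_apply_eq_of_adj hxy hne
  obtain ⟨m, hmx, hmy, hm⟩ := hX.triangle hxy (by omega : X.dist x q = X.dist y q)
  have := hp.dist_apply_eq_of_adj hmx (hp.apply_ne_of_triangle hX hxy hne hmx hmy)
  exact ⟨m, hmx, hmy, hp.apply_eq_of_dist_le hq (by omega)⟩

lemma exists_adj_adj_apply_eq_of_quad (hxy : X.Adj x y) (hyz : X.Adj y z) (hxz : x ≠ z)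
    (hnxz : ¬ X.Adj x z) (hne : p x ≠ p y) {k : ℕ} (hx : X.dist x (p x) = k + 1)
    (hz : X.dist z (p x) = k + 1) :
    ∃ w, X.Adj w x ∧ X.Adj w z ∧ p w = p x ∧ X.dist w (p w) = k := by
  have hy := hp.dist_eq_add_one (x := y) (hp.mem x) hne
  have hk := hp.dist_apply_eq_of_adj hxy hne
  obtain ⟨w, hwx, hwz, hw⟩ := hX.quadrangle (o := p x) hxy.symm hyz
    (dist_eq_two_of_adj_of_adj hxy hyz hxz hnxz) (by omega) (by omega)
  have hlip := hp.dist_apply_le_of_adj hwx.symm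
  have hpw := hp.apply_eq_of_dist_le (x := w) (hp.mem x) (by omega)
  exact ⟨w, hwx, hwz, hpw, by rw [hpw]; omega⟩

lemma exists_isInducedSquare_of_apply_ne (hxy : X.Adj x y) (hne : p x ≠ p y) {k : ℕ}
    (hx : X.dist x (p x) = k + 1) :
    ∃ x' y', IsInducedSquare X x' y' y x ∧ p x' = p x ∧ p y' = p y ∧ X.dist x' (p x') = k := by
  obtain ⟨x', hxx', hx'⟩ := exists_adj_dist_eq_of_dist_eq_add_one hx
  have hpx' : p x' = p x :=
    hp.apply_eq_of_dist_le (hp.mem x) (by have := hp.dist_apply_le_of_adj hxx'; omega)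
  rw [← hpx'] at hx'
  have hne' : p y ≠ p x' := hpx' ▸ hne.symm
  have hy := (hp.dist_apply_eq_of_adj hxy hne).symm.trans hx
  have hnyx' := hp.not_adj_of_dist_apply_ne hne' (by omega)
  obtain ⟨y', hy'y, hy'x', hpy', hy'⟩ := hp.exists_adj_adj_apply_eq_of_quad hX hxy.symm hxx'
    (ne_of_apply_ne p hne') hnyx' hne.symm hy (by rw [hp.dist_eq_add_one (hp.mem y) hne', hx'])
  have hne'' : p y' ≠ p x := by rw [hpy']; exact hne.symm
  exact ⟨x', y', ⟨hy'x'.symm, hy'y, hxy.symm, hxx', ne_of_apply_ne p hne'.symm,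
    fun h => hnyx' h.symm, ne_of_apply_ne p hne'', hp.not_adj_of_dist_apply_ne hne'' (by omega)⟩,
    hpx', hpy', hx'⟩

variable {a b c d : V}

lemma dist_apply_le_of_isInducedSquare (hsq : IsInducedSquare X a b c d) (hab : p a ≠ p b)
    (hca : p c = p a) (hda : p d = p a) : X.dist a (p a) ≤ X.dist d (p d) := by
  obtain ⟨hab', hbc, hcd, hda', hac, hnac, hbd, hnbd⟩ := hsq
  by_contra! hlt
  have h₁ := hp.dist_apply_eq_of_adj hab' hab
  have h₂ := hp.dist_apply_eq_of_adj hbc (by rw [hca]; exact hab.symm)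
  have hlip := hp.dist_apply_le_of_adj hda'.symm
  have hbd' : p b ≠ p d := by rw [hda]; exact hab.symm
  -- The quadrangle condition towards `p b` gives `s` such that `{b, d}` and `{a, c, s}` span a
  -- `K_{2,3}`.
  obtain ⟨s, hsb, hsd, hps, hs⟩ := hp.exists_adj_adj_apply_eq_of_quad hX hab'.symm hda'.symm
    hbd hnbd hab.symm (k := X.dist d (p d)) (by omega)
    (by rw [hp.dist_eq_add_one (hp.mem b) hbd'])
  have hcs : p c ≠ p s := by rw [hca, hps]; exact hab
  have has : p a ≠ p s := by rw [hps]; exact hab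
  exact hX.2.2.2.1 ⟨b, d, a, c, s, hbd, hac, ne_of_apply_ne p hcs, ne_of_apply_ne p has,
    hab'.symm, hbc, hsb.symm, hda', hcd.symm, hsd.symm, hnbd, hnac,
    hp.not_adj_of_dist_apply_ne hcs (by omega), hp.not_adj_of_dist_apply_ne has (by omega)⟩

lemma apply_eq_of_isInducedSquare (hsq : IsInducedSquare X a b c d) (hca : p c = p a)
    (hda : p d = p a) : p b = p a := by
  by_contra hba
  obtain ⟨hab, hbc, hcd, hda', hac, hnac, hbd, hnbd⟩ := id hsq
  have h₁ := hp.dist_apply_eq_of_adj hab (Ne.symm hba)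
  have h₂ := hp.dist_apply_eq_of_adj hbc (by rw [hca]; exact hba)
  obtain ⟨k, hk⟩ : ∃ k, X.dist a (p a) = k + 1 := Nat.exists_eq_succ_of_ne_zero fun h0 =>
    hac <| by rw [(hX.1.dist_eq_zero_iff).1 h0,
      (hX.1.dist_eq_zero_iff).1 (by omega : X.dist c (p c) = 0), hca]
  obtain ⟨w, hwa, hwc, hpw, hw⟩ := hp.exists_adj_adj_apply_eq_of_quad hX hab hbc hac hnac
    (Ne.symm hba) hk (by rw [← hca]; omega)
  have hbw : p b ≠ p w := by rw [hpw]; exact hba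
  -- If `w ≠ d`, then `{a, c}` and `{b, d, w}` span a `K_{2,3}`.
  obtain rfl | hwd := eq_or_ne w d
  · have := hp.dist_apply_le_of_isInducedSquare hX hsq (Ne.symm hba) hca hpw
    omega
  have hnwd : ¬ X.Adj d w := fun hdw => hnac (hX.2.2.2.2.adj hdw hda' hcd.symm hwa hwc hac)
  exact hX.2.2.2.1 ⟨a, c, b, d, w, hac, hbd, hwd.symm, ne_of_apply_ne p hbw, hab, hda'.symm,
    hwa.symm, hbc.symm, hcd, hwc.symm, hnac, hnbd, hnwd,
    hp.not_adj_of_dist_apply_ne hbw (by omega)⟩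

lemma adj_of_apply_ne (hab : X.Adj a b) (had : X.Adj a d) (hpab : p a ≠ p b)
    (hpad : p a ≠ p d) (hpbd : p b ≠ p d) : X.Adj b d := by
  by_contra hnbd
  have hb := hp.dist_apply_eq_of_adj hab hpab
  have hd := hp.dist_apply_eq_of_adj had hpad
  obtain ⟨k, hk⟩ : ∃ k, X.dist a (p a) = k + 1 := Nat.exists_eq_succ_of_ne_zero fun h0 =>
    hnbd <| by
      rw [(hX.1.dist_eq_zero_iff).1 (by omega : X.dist b (p b) = 0),
        (hX.1.dist_eq_zero_iff).1 (by omega : X.dist d (p d) = 0)]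
      exact hp.isClique (hp.mem b) (hp.mem d) hpbd
  -- Walking towards `p b` and `p a` produces `m`, `y`, `t` such that `{a, y}` and `{b, m, t}` span
  -- a `K_{2,3}`.
  obtain ⟨m, hma, hmd, hpm⟩ := hp.exists_adj_adj_apply_eq hX had hpad (hp.mem b) hpab.symm hpbd
  have hm := hp.dist_apply_eq_of_adj hma (by rw [hpm]; exact hpab.symm)
  have hbm : b ≠ m := by rintro rfl; exact hnbd hmd
  have hnbm : ¬ X.Adj b m := fun hbm' =>
    hp.apply_ne_of_triangle hX hab.symm hpab.symm hbm'.symm hma hpm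
  obtain ⟨y, hyb, hym, hpy, hy⟩ := hp.exists_adj_adj_apply_eq_of_quad hX hab.symm hma.symm hbm
    hnbm hpab.symm (k := k) (by omega) (by rw [← hpm]; omega)
  have hay : p a ≠ p y := by rw [hpy]; exact hpab
  obtain ⟨t, hta, hty, hpt, ht⟩ := hp.exists_adj_adj_apply_eq_of_quad hX hab hyb.symm
    (ne_of_apply_ne p hay) (hp.not_adj_of_dist_apply_ne hay (by omega)) hpab hk
    (by rw [hp.dist_eq_add_one (hp.mem a) hay]; omega)
  have hmt : p m ≠ p t := by rw [hpm, hpt]; exact hpab.symm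
  have hbt : p b ≠ p t := by rw [hpt]; exact hpab.symm
  exact hX.2.2.2.1 ⟨a, y, b, m, t, ne_of_apply_ne p hay, hbm, ne_of_apply_ne p hmt,
    ne_of_apply_ne p hbt, hab, hma.symm, hta.symm, hyb, hym, hty.symm,
    hp.not_adj_of_dist_apply_ne hay (by omega), hnbm,
    hp.not_adj_of_dist_apply_ne hmt (by omega), hp.not_adj_of_dist_apply_ne hbt (by omega)⟩

lemma apply_ne_apply_of_isInducedSquare (hsq : IsInducedSquare X a b c d) (hab : p a ≠ p b) :
    p c ≠ p d := by
  intro hcd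
  by_cases hca : p c = p a
  · exact hab (hp.apply_eq_of_isInducedSquare hX hsq hca (hcd ▸ hca)).symm
  by_cases hcb : p c = p b
  · exact hab (hp.apply_eq_of_isInducedSquare hX hsq.reflect (hcd ▸ hcb) hcb)
  obtain ⟨hab', -, -, hda, -, -, -, hnbd⟩ := hsq
  exact hnbd (hp.adj_of_apply_ne hX hab' hda.symm hab (hcd ▸ Ne.symm hca) (hcd ▸ Ne.symm hcb))

end IsGateMap

instance : Std.Symm (EdgeRel X) where
  symm e f h := by
    rcases h with ⟨a, b, c, hab, hbc, hac, rfl, rfl⟩ |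
      ⟨a, b, c, d, hab, hbc, hcd, hda, hac, hnac, hbd, hnbd, rfl, rfl⟩
    · exact Or.inl ⟨c, b, a, hbc.symm, hab.symm, hac.symm, Sym2.eq_swap, Sym2.eq_swap⟩
    · exact Or.inr ⟨c, d, a, b, hcd, hda, hab, hbc, hac.symm, fun h => hnac h.symm, hbd.symm,
        fun h => hnbd h.symm, rfl, rfl⟩

lemma SimpleGraph.IsClique.reflTransGen_edgeRel {K : Set V} (hK : X.IsClique K) {a b c d : V}
    (ha : a ∈ K) (hb : b ∈ K) (hc : c ∈ K) (hd : d ∈ K) (hab : a ≠ b) (hcd : c ≠ d) :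
    Relation.ReflTransGen (EdgeRel X) s(a, b) s(c, d) := by
  have hpivot {x y z : V} (hx : x ∈ K) (hy : y ∈ K) (hz : z ∈ K) (hxy : x ≠ y) (hxz : x ≠ z) :
      Relation.ReflTransGen (EdgeRel X) s(x, y) s(x, z) := by
    obtain rfl | hyz := eq_or_ne y z
    · rfl
    exact .single (Or.inl ⟨y, x, z, hK hy hx hxy.symm, hK hx hz hxz, hK hy hz hyz,
      Sym2.eq_swap, rfl⟩)
  obtain rfl | hca := eq_or_ne c a
  · exact hpivot ha hb hd hab hcd
  exact (hpivot ha hb hc hab hca.symm).trans (Sym2.eq_swap (a := a) ▸ hpivot hc ha hd hca hcd)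

namespace IsHyperplane

variable {J : Set (Sym2 V)} (hJ : IsHyperplane X J)
include hJ

lemma eq_setOf_reflTransGen {e : Sym2 V} (he : e ∈ J) :
    J = {f | Relation.ReflTransGen (EdgeRel X) e f} := by
  obtain ⟨e₀, -, rfl⟩ := hJ
  ext f
  exact ⟨fun hf => (symm he).trans hf, fun hf => Relation.ReflTransGen.trans he hf⟩

lemma mem_of_reflTransGen {e f : Sym2 V} (he : e ∈ J)
    (h : Relation.ReflTransGen (EdgeRel X) e f) : f ∈ J := by
  rw [hJ.eq_setOf_reflTransGen he]
  exact h

end IsHyperplane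

structure IsDualHyperplane (X : SimpleGraph V) (K : Set V) (J : Set (Sym2 V)) : Prop where
  isHyperplane : IsHyperplane X J
  exists_mem : ∃ a ∈ K, ∃ b ∈ K, a ≠ b ∧ s(a, b) ∈ J

lemma IsHyperplane.isDualHyperplane_edgeClique {J : Set (Sym2 V)} (hJ : IsHyperplane X J)
    {u v : V} (huv : X.Adj u v) (huvJ : s(u, v) ∈ J) : IsDualHyperplane X (edgeClique X u v) J :=
  ⟨hJ, u, left_mem_edgeClique, v, right_mem_edgeClique, huv.ne, huvJ⟩

namespace IsGateMap

variable {K : Set V} {p : V → V} (hp : IsGateMap X K p) (hX : QuasiMedian X)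
  {J : Set (Sym2 V)} (hJ : IsDualHyperplane X K J)
include hp hX hJ

lemma mem_of_apply_ne {x y : V} (hxy : X.Adj x y) (hne : p x ≠ p y) : s(x, y) ∈ J := by
  obtain ⟨a, ha, b, hb, hab, habJ⟩ := hJ.exists_mem
  obtain ⟨k, hk⟩ : ∃ k, X.dist x (p x) = k := ⟨_, rfl⟩
  induction k generalizing x y with
  | zero =>
    have hx := (hX.1.dist_eq_zero_iff).1 hk
    have hy := (hX.1.dist_eq_zero_iff).1 ((hp.dist_apply_eq_of_adj hxy hne).symm.trans hk)
    rw [hx, hy]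
    exact hJ.isHyperplane.mem_of_reflTransGen habJ
      (hp.isClique.reflTransGen_edgeRel ha hb (hp.mem x) (hp.mem y) hab hne)
  | succ k ih =>
    obtain ⟨x', y', hsq, hpx, hpy, hk'⟩ := hp.exists_isInducedSquare_of_apply_ne hX hxy hne hk
    have hyx := hJ.isHyperplane.mem_of_reflTransGen
      (ih hsq.1 (by rw [hpx, hpy]; exact hne) hk') (.single hsq.edgeRel)
    rwa [Sym2.eq_swap] at hyx

lemma apply_ne_of_mem {x y : V} (hxy : s(x, y) ∈ J) : p x ≠ p y := by
  obtain ⟨a, ha, b, hb, hab, habJ⟩ := hJ.exists_mem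
  suffices ∀ f ∈ J, ¬ (f.map p).IsDiag by simpa using this _ hxy
  rw [hJ.isHyperplane.eq_setOf_reflTransGen habJ]
  intro f hf
  induction hf with
  | refl => simpa [hp.apply_of_mem ha, hp.apply_of_mem hb] using hab
  | tail _ hstep ih =>
    rcases hstep with ⟨u, v, w, huv, hvw, huw, rfl, rfl⟩ |
      ⟨u, v, w, t, huv, hvw, hwt, htu, huw, hnuw, hvt, hnvt, rfl, rfl⟩
    · simp only [Sym2.map_mk, Sym2.mk_isDiag_iff] at ih ⊢
      exact (hp.apply_ne_of_triangle hX huv.symm (Ne.symm ih) hvw.symm huw.symm).symm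
    · simp only [Sym2.map_mk, Sym2.mk_isDiag_iff] at ih ⊢
      exact hp.apply_ne_apply_of_isInducedSquare hX
        ⟨huv, hvw, hwt, htu, huw, hnuw, hvt, hnvt⟩ ih

lemma apply_eq_of_reachable {z₁ z₂ : V} (h : (X.deleteEdges J).Reachable z₁ z₂) :
    p z₁ = p z₂ := by
  obtain ⟨w⟩ := h
  induction w with
  | nil => rfl
  | cons h _ ih =>
    rw [deleteEdges_adj] at h
    exact (not_not.1 fun hne => h.2 (hp.mem_of_apply_ne hX hJ h.1 hne)).trans ih

lemma reachable_of_apply_eq {z w : V} (hz : z ∈ K) (hw : p w = z) :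
    (X.deleteEdges J).Reachable z w := by
  obtain ⟨k, hk⟩ : ∃ k, X.dist w z = k := ⟨_, rfl⟩
  induction k generalizing w with
  | zero => rw [(hX.1.dist_eq_zero_iff).1 hk]
  | succ k ih =>
    obtain ⟨w', hww', hw'⟩ := exists_adj_dist_eq_of_dist_eq_add_one hk
    have hpw' : p w' = z := hp.apply_eq_of_dist_le hz
      (by have := hp.dist_apply_le_of_adj hww'; rw [hw] at this; omega)
    refine (ih hpw' hw').trans (Adj.reachable ?_)
    rw [deleteEdges_adj]
    exact ⟨hww'.symm, fun hJ' => hp.apply_ne_of_mem hX hJ hJ' (hpw'.trans hw.symm)⟩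

lemma setOf_reachable_eq {z : V} (hz : z ∈ K) :
    {w | (X.deleteEdges J).Reachable z w} = {w | p w = z} := by
  ext w
  exact ⟨fun h => (hp.apply_eq_of_reachable hX hJ h).symm.trans (hp.apply_of_mem hz),
    hp.reachable_of_apply_eq hX hJ hz⟩

end IsGateMap

/-- A geodesic crosses a hyperplane at most once: if `x'` lies beyond the edge `xy` of `J`, so
does `y'` for any edge `x'y'` of `J`, since both would get the gate `y` in the clique of `xy`. -/
lemma QuasiMedian.dist_le_of_mem_hyperplane (hX : QuasiMedian X) {J : Set (Sym2 V)}
    (hJ : IsHyperplane X J) {x y x' y' : V} (hxy : X.Adj x y) (hxyJ : s(x, y) ∈ J)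
    (hx'y'J : s(x', y') ∈ J) (h : X.dist x' y < X.dist x' x) : X.dist y' x ≤ X.dist y' y := by
  obtain ⟨p, hp⟩ := (hX.isGated_edgeClique hxy).exists_isGateMap
    (hX.2.2.2.2.isClique_edgeClique hxy)
  by_contra! h'
  exact hp.apply_ne_of_mem hX (hJ.isDualHyperplane_edgeClique hxy hxyJ) hx'y'J
    ((hp.apply_eq_of_dist_lt right_mem_edgeClique left_mem_edgeClique h).trans
      (hp.apply_eq_of_dist_lt right_mem_edgeClique left_mem_edgeClique h').symm)

/-- A geodesic through `m` from outside the fibre of `z` back to outside it would change gates,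
hence cross `J`, twice. -/
lemma IsGateMap.isConvexSet_setOf_apply_ne {K : Set V} {p : V → V} (hp : IsGateMap X K p)
    (hX : QuasiMedian X) {J : Set (Sym2 V)} (hJ : IsDualHyperplane X K J) (z : V) :
    IsConvexSet X {w | p w ≠ z} := by
  intro x hx y hy m hm hmz
  obtain ⟨w₁, hw₁⟩ := (hX.1 x m).exists_walk_length_eq_dist
  obtain ⟨w₂, hw₂⟩ := (hX.1 m y).exists_walk_length_eq_dist
  set W := w₁.append w₂
  have hW : W.length = X.dist x y := by rw [Walk.length_append, hw₁, hw₂]; exact hm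
  set t := w₁.length
  have hWt : W.getVert t = m := by simp [W, t, Walk.getVert_append]
  have hWy : W.getVert (t + w₂.length) = y := by rw [← Walk.length_append, Walk.getVert_length]
  obtain ⟨i, hit, hi⟩ := Nat.exists_lt_apply_ne_apply_succ (fun k => p (W.getVert k)) (n := t)
    (by simpa [hWt, hmz] using hx)
  obtain ⟨j, hjt, hj⟩ := Nat.exists_lt_apply_ne_apply_succ (fun k => p (W.getVert (t + k)))
    (n := w₂.length) (by simpa [hWt, hmz, hWy] using (Ne.symm hy))
  have hlen : W.length = t + w₂.length := Walk.length_append _ _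
  have hgeo {k l : ℕ} (hkl : k ≤ l) (hl : l ≤ W.length) :=
    W.dist_getVert_eq_of_length_eq_dist hW hkl hl
  have hcross := hX.dist_le_of_mem_hyperplane hJ.isHyperplane (W.adj_getVert_succ (by omega))
    (hp.mem_of_apply_ne hX hJ (W.adj_getVert_succ (by omega)) hi)
    (hp.mem_of_apply_ne hX hJ (W.adj_getVert_succ (by omega)) hj)
    (by rw [dist_comm, hgeo (k := i + 1) (by omega) (by omega), dist_comm,
      hgeo (k := i) (by omega) (by omega)]; omega)
  rw [dist_comm, hgeo (by omega) (by omega), dist_comm, hgeo (by omega) (by omega)] at hcross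
  omega

/-- If pairwise intersecting gated subgraphs have their intersection inside a
sector `S`, then one of them is contained in `S`. -/
theorem stmt5 (X : SimpleGraph V) (hX : QuasiMedian X)
    (J : Set (Sym2 V)) (hJ : IsHyperplane X J) (S : Set V) (hS : IsSectorOf X J S)
    (n : ℕ) (hn : 0 < n) (Y : Fin n → Set V)
    (hgated : ∀ i, IsGated X (Y i))
    (hpair : ∀ i j, (Y i ∩ Y j).Nonempty)
    (hsub : (⋂ i, Y i) ⊆ S) :
    ∃ i, Y i ⊆ S := by
  obtain ⟨v₀, rfl⟩ := hS
  by_cases hall : ∀ w, (X.deleteEdges J).Reachable v₀ w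
  · exact ⟨⟨0, hn⟩, fun w _ => hall w⟩
  obtain ⟨w₀, hw₀⟩ := not_forall.1 hall
  obtain ⟨u, u', huu', hv₀u, huu'J⟩ := hX.1.exists_adj_mem_of_not_reachable_deleteEdges hw₀
  obtain ⟨p, hp⟩ := (hX.isGated_edgeClique huu').exists_isGateMap
    (hX.2.2.2.2.isClique_edgeClique huu')
  have hdual := hJ.isDualHyperplane_edgeClique huu' huu'J
  have hsector : {w | (X.deleteEdges J).Reachable v₀ w} = {w | p w = u} := by
    rw [← hp.setOf_reachable_eq hX hdual left_mem_edgeClique]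
    ext w
    exact ⟨hv₀u.symm.trans, hv₀u.trans⟩
  rw [hsector] at hsub ⊢
  by_contra! hout
  obtain ⟨n, rfl⟩ := Nat.exists_eq_succ_of_ne_zero hn.ne'
  obtain ⟨z, hzY, hz⟩ := nonempty_iInter_inter_of_isGated hX.1 hgated hpair
    (hp.isConvexSet_setOf_apply_ne hX hdual u) (fun i => Set.not_subset.1 (hout i))
  exact hz (hsub hzY)
end

section
/- Let X be a median graph, 𝒥 a non-empty collection of hyperplanes of X, and π : X → X\\𝒥 the canonical projection to the hyperplane-collapse. For every vertex v of X\\𝒥, the preimage π⁻¹(v) induces a proper convex subgraph of X; indeed π⁻¹(v) equals the intersection of all halfspaces of X containing a fixed lift of v that are delimited by hyperplanes in 𝒥. -/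
open SimpleGraph

variable {V : Type*}

/-- The setoid of the projection `π : X → X\\𝒥`: the equivalence relation generated
by contracting every edge whose hyperplane is *not* in `𝒥` (so that two vertices
have the same image iff no hyperplane of `𝒥` separates them). -/
def collapseCompSetoid (X : SimpleGraph V) (𝒥 : Set (Set (Sym2 V))) : Setoid V :=
  Relation.EqvGen.setoid
    (fun x y => X.Adj x y ∧ ∃ J, IsHyperplane X J ∧ J ∉ 𝒥 ∧ s(x, y) ∈ J)

/-!
In a median graph the distances from any vertex to the two ends of an edge `ab` differ by
exactly one, so `ab` cuts the vertices into the side of `a` and the side of `b`. Djoković's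
lemma, proved by induction on the distance to `a` with the quadrangle condition supplying a
square at each step, puts every edge crossing this cut into the hyperplane of `ab`; hence a
walk avoiding that hyperplane never changes sides.

Along a geodesic from `u` towards a vertex `z` that no hyperplane of `𝒥` separates from `u`,
every edge has `z` on its far side, so its hyperplane is not in `𝒥` and the edge is collapsed.
This identifies the fibre with the intersection of halfspaces and shows it is convex; it is
proper because a hyperplane of `𝒥` separates the ends of its own edges.
-/

namespace SimpleGraph

variable {G : SimpleGraph V} {u w : V} {n : ℕ}

theorem exists_adj_dist_eq_of_dist_eq_succ (h : G.dist w u = n + 1) :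
    ∃ v, G.Adj u v ∧ G.dist w v = n := by
  obtain ⟨p, hp⟩ := exists_walk_of_dist_ne_zero (show G.dist u w ≠ 0 by rw [dist_comm]; omega)
  cases p with
  | nil => simp at h
  | @cons _ v _ huv q =>
    obtain ⟨q', hq'⟩ := q.reachable.exists_walk_length_eq_dist
    have hvw := dist_le q
    have huw := dist_le (Walk.cons huv q')
    rw [Walk.length_cons] at hp huw
    rw [dist_comm] at h
    exact ⟨v, huv, by rw [dist_comm]; omega⟩

end SimpleGraph

variable {X : SimpleGraph V} {a b c p q u v z : V}

namespace MedianGraph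

theorem dist_eq_succ_or_of_adj (hX : MedianGraph X) (h : X.Adj u v) (w : V) :
    X.dist w v = X.dist w u + 1 ∨ X.dist w u = X.dist w v + 1 := by
  obtain ⟨m, ⟨hwu, huv, hwv⟩, -⟩ := hX.2 w u v
  unfold InInterval at hwu huv hwv
  rw [dist_eq_one_iff_adj.mpr h] at huv
  rcases Nat.eq_zero_or_pos (X.dist u m) with hum | hum
  · obtain rfl := hX.1.dist_eq_zero_iff.mp hum
    rw [dist_eq_one_iff_adj.mpr h] at hwv
    omega
  · obtain rfl := hX.1.dist_eq_zero_iff.mp (show X.dist m v = 0 by omega)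
    rw [dist_eq_one_iff_adj.mpr h.symm] at hwu
    omega

theorem dist_eq_succ_or_of_adj' (hX : MedianGraph X) (h : X.Adj u v) (w : V) :
    X.dist v w = X.dist u w + 1 ∨ X.dist u w = X.dist v w + 1 := by
  simpa only [dist_comm (u := w)] using hX.dist_eq_succ_or_of_adj h w

theorem not_adj_of_adj_of_adj (hX : MedianGraph X) (hab : X.Adj a b) (hbc : X.Adj b c) :
    ¬ X.Adj a c := fun hac => by
  have := hX.dist_eq_succ_or_of_adj hbc a
  rw [dist_eq_one_iff_adj.mpr hab, dist_eq_one_iff_adj.mpr hac] at this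
  omega

theorem quadCond (hX : MedianGraph X) : QuadCond X := by
  intro o x y z _ _ hxy hzx hzy
  obtain ⟨m, ⟨hoxm, hxym, hoym⟩, -⟩ := hX.2 o x y
  unfold InInterval at hoxm hxym hoym
  have hxm : X.dist x m ≠ 0 := fun h0 => by
    obtain rfl := hX.1.dist_eq_zero_iff.mp h0
    omega
  have hmy : X.dist m y ≠ 0 := fun h0 => by
    obtain rfl := hX.1.dist_eq_zero_iff.mp h0
    rw [dist_comm] at hxy
    omega
  refine ⟨m, dist_eq_one_iff_adj.mp ?_, dist_eq_one_iff_adj.mp ?_, ?_⟩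
  · rw [dist_comm]; omega
  · omega
  · omega

end MedianGraph

instance inst_s8 : Std.Symm (EdgeRel X) where
  symm := by
    rintro e f (⟨a, b, c, hab, hbc, hac, rfl, rfl⟩ |
      ⟨a, b, c, d, hab, hbc, hcd, hda, hac, hac', hbd, hbd', rfl, rfl⟩)
    · exact Or.inl ⟨c, b, a, hbc.symm, hab.symm, hac.symm, Sym2.eq_swap, Sym2.eq_swap⟩
    · exact Or.inr ⟨c, d, a, b, hcd, hda, hab, hbc, hac.symm, fun h => hac' h.symm, hbd.symm,
        fun h => hbd' h.symm, rfl, rfl⟩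

def edgeHyperplane (X : SimpleGraph V) (a b : V) : Set (Sym2 V) :=
  {f | Relation.ReflTransGen (EdgeRel X) s(a, b) f}

theorem mem_edgeHyperplane_self : s(a, b) ∈ edgeHyperplane X a b :=
  Relation.ReflTransGen.refl

theorem isHyperplane_edgeHyperplane (hab : X.Adj a b) : IsHyperplane X (edgeHyperplane X a b) :=
  ⟨s(a, b), hab, rfl⟩

namespace IsHyperplane

theorem exists_eq_edgeHyperplane {J : Set (Sym2 V)} (hJ : IsHyperplane X J) :
    ∃ a b, X.Adj a b ∧ J = edgeHyperplane X a b := by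
  obtain ⟨e, he, rfl⟩ := hJ
  induction e using Sym2.ind with
  | _ a b => exact ⟨a, b, he, rfl⟩

theorem eq_of_mem {J J' : Set (Sym2 V)} (hJ : IsHyperplane X J) (hJ' : IsHyperplane X J')
    {f : Sym2 V} (hf : f ∈ J) (hf' : f ∈ J') : J = J' := by
  obtain ⟨e, -, rfl⟩ := hJ
  obtain ⟨e', -, rfl⟩ := hJ'
  have hee' : Relation.ReflTransGen (EdgeRel X) e e' := Relation.ReflTransGen.trans hf (symm hf')
  ext g
  exact ⟨fun hg => (symm hee').trans hg, fun hg => hee'.trans hg⟩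

end IsHyperplane

namespace MedianGraph

theorem mem_edgeHyperplane_of_adj (hX : MedianGraph X) (hab : X.Adj a b) (hpq : X.Adj p q)
    (hp : X.dist b p = X.dist a p + 1) (hq : X.dist a q = X.dist b q + 1) :
    s(p, q) ∈ edgeHyperplane X a b := by
  obtain ⟨n, hn⟩ : ∃ n, X.dist a p = n := ⟨_, rfl⟩
  induction n generalizing p q with
  | zero =>
    obtain rfl := hX.1.dist_eq_zero_iff.mp hn
    rw [dist_eq_one_iff_adj.mpr hpq] at hq
    obtain rfl := hX.1.dist_eq_zero_iff.mp (show X.dist b q = 0 by omega)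
    exact mem_edgeHyperplane_self
  | succ m ih =>
    have hqa := hX.dist_eq_succ_or_of_adj hpq a
    have hqb := hX.dist_eq_succ_or_of_adj hpq b
    obtain ⟨p', hpp', hp'a⟩ := exists_adj_dist_eq_of_dist_eq_succ hn
    have hp'b := hX.dist_eq_succ_or_of_adj hpp' b
    have hp'ab := hX.dist_eq_succ_or_of_adj' hab p'
    have hqp' : X.dist q p' = 2 := by
      have hle := hX.1.dist_triangle (u := q) (v := p) (w := p')
      have hge := hX.1.dist_triangle (u := a) (v := p') (w := q)
      rw [dist_comm (u := q) (v := p), dist_eq_one_iff_adj.mpr hpq,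
        dist_eq_one_iff_adj.mpr hpp'] at hle
      rw [dist_comm (u := p')] at hge
      omega
    obtain ⟨r, hrq, hrp', hbr⟩ := hX.quadCond b q p' p hpq hpp' hqp' (by omega) (by omega)
    have hra := hX.dist_eq_succ_or_of_adj hrq a
    have hrab := hX.dist_eq_succ_or_of_adj' hab r
    have hsquare : EdgeRel X s(p', r) s(q, p) :=
      Or.inr ⟨p', r, q, p, hrp'.symm, hrq, hpq.symm, hpp',
        fun h => by subst h; omega, hX.not_adj_of_adj_of_adj hrp'.symm hrq,
        fun h => by subst h; omega, hX.not_adj_of_adj_of_adj hrq hpq.symm, rfl, rfl⟩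
    rw [Sym2.eq_swap]
    exact (ih hrp'.symm (by omega) (by omega) hp'a).tail hsquare

theorem dist_lt_of_reachable_deleteEdges (hX : MedianGraph X) (hab : X.Adj a b)
    (hpq : (X.deleteEdges (edgeHyperplane X a b)).Reachable p q)
    (hp : X.dist a p < X.dist b p) : X.dist a q < X.dist b q := by
  obtain ⟨r⟩ := hpq
  induction r with
  | nil => exact hp
  | @cons u v _ huv _ ih =>
    rw [deleteEdges_adj] at huv
    apply ih
    by_contra hv
    have hu' := hX.dist_eq_succ_or_of_adj' hab u
    have hv' := hX.dist_eq_succ_or_of_adj' hab v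
    exact huv.2 (hX.mem_edgeHyperplane_of_adj hab huv.1 (by omega) (by omega))

theorem not_reachable_deleteEdges_edgeHyperplane (hX : MedianGraph X) (hab : X.Adj a b) :
    ¬ (X.deleteEdges (edgeHyperplane X a b)).Reachable a b := fun h => by
  have := hX.dist_lt_of_reachable_deleteEdges hab h
  simp only [dist_self, dist_eq_one_iff_adj.mpr hab, dist_eq_one_iff_adj.mpr hab.symm] at this
  omega

end MedianGraph

def CollapsedEdge (X : SimpleGraph V) (𝒥 : Set (Set (Sym2 V))) (u v : V) : Prop :=
  X.Adj u v ∧ ∃ J, IsHyperplane X J ∧ J ∉ 𝒥 ∧ s(u, v) ∈ J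

variable {𝒥 : Set (Set (Sym2 V))} {J : Set (Sym2 V)}

theorem CollapsedEdge.deleteEdges_adj (h𝒥 : ∀ J ∈ 𝒥, IsHyperplane X J)
    (h : CollapsedEdge X 𝒥 u v) (hJ : J ∈ 𝒥) : (X.deleteEdges J).Adj u v := by
  obtain ⟨huv, J', hJ', hJ'𝒥, huvJ'⟩ := h
  refine SimpleGraph.deleteEdges_adj.mpr ⟨huv, fun huvJ => hJ'𝒥 ?_⟩
  rwa [← (h𝒥 J hJ).eq_of_mem hJ' huvJ huvJ']

theorem reachable_deleteEdges_of_collapseCompSetoid (h𝒥 : ∀ J ∈ 𝒥, IsHyperplane X J)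
    (h : (collapseCompSetoid X 𝒥).r u v) (hJ : J ∈ 𝒥) :
    (X.deleteEdges J).Reachable u v := by
  change Relation.EqvGen (CollapsedEdge X 𝒥) u v at h
  induction h with
  | rel u v h => exact (h.deleteEdges_adj h𝒥 hJ).reachable
  | refl u => exact Reachable.refl u
  | symm _ _ _ ih => exact ih.symm
  | trans _ _ _ _ _ ih ih' => exact ih.trans ih'

namespace MedianGraph

theorem collapsedEdge_of_dist_lt (hX : MedianGraph X) (huv : X.Adj u v)
    (hz : X.dist v z < X.dist u z) (hreach : ∀ J ∈ 𝒥, (X.deleteEdges J).Reachable u z) :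
    CollapsedEdge X 𝒥 u v := by
  refine ⟨huv, edgeHyperplane X u v, isHyperplane_edgeHyperplane huv, fun hmem => ?_,
    mem_edgeHyperplane_self⟩
  have := hX.dist_lt_of_reachable_deleteEdges huv (hreach _ hmem)
    (by rw [dist_self, dist_eq_one_iff_adj.mpr huv.symm]; omega)
  omega

theorem collapseCompSetoid_r_of_inInterval (hX : MedianGraph X)
    (h𝒥 : ∀ J ∈ 𝒥, IsHyperplane X J) {m : V} (hm : InInterval X u m z)
    (hreach : ∀ J ∈ 𝒥, (X.deleteEdges J).Reachable u z) :
    (collapseCompSetoid X 𝒥).r u m := by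
  obtain ⟨n, hn⟩ : ∃ n, X.dist m u = n := ⟨_, rfl⟩
  induction n generalizing u with
  | zero =>
    obtain rfl := hX.1.dist_eq_zero_iff.mp hn
    exact (collapseCompSetoid X 𝒥).iseqv.refl m
  | succ n ih =>
    obtain ⟨v, huv, hvm⟩ := exists_adj_dist_eq_of_dist_eq_succ hn
    unfold InInterval at hm
    have hmu : X.dist u m = X.dist m u := dist_comm
    have hmv : X.dist v m = X.dist m v := dist_comm
    have hvz := hX.1.dist_triangle (u := v) (v := m) (w := z)
    have huz := hX.1.dist_triangle (u := u) (v := v) (w := z)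
    rw [dist_eq_one_iff_adj.mpr huv] at huz
    have huv' : CollapsedEdge X 𝒥 u v := hX.collapsedEdge_of_dist_lt huv (by omega) hreach
    have hvreach : ∀ J ∈ 𝒥, (X.deleteEdges J).Reachable v z := fun J hJ =>
      (huv'.deleteEdges_adj h𝒥 hJ).reachable.symm.trans (hreach J hJ)
    exact (collapseCompSetoid X 𝒥).iseqv.trans (Relation.EqvGen.rel _ _ huv')
      (ih (by unfold InInterval; omega) hvreach hvm)

end MedianGraph

section Fibre

variable (X 𝒥)

theorem collapseCompSetoid_fibre_eq (hX : MedianGraph X) (h𝒥 : ∀ J ∈ 𝒥, IsHyperplane X J)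
    (x : V) : {y | (collapseCompSetoid X 𝒥).r x y} =
      ⋂ J ∈ 𝒥, {y | (X.deleteEdges J).Reachable x y} := by
  ext y
  simp only [Set.mem_ofPred_eq, Set.mem_iInter]
  refine ⟨fun h J hJ => reachable_deleteEdges_of_collapseCompSetoid h𝒥 h hJ,
    fun h => hX.collapseCompSetoid_r_of_inInterval h𝒥 ?_ h⟩
  simp [InInterval]

theorem isConvexSet_collapseCompSetoid_fibre (hX : MedianGraph X)
    (h𝒥 : ∀ J ∈ 𝒥, IsHyperplane X J) (x : V) :
    IsConvexSet X {y | (collapseCompSetoid X 𝒥).r x y} := by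
  intro a (ha : (collapseCompSetoid X 𝒥).r x a) b (hb : (collapseCompSetoid X 𝒥).r x b) m hm
  have hab := (collapseCompSetoid X 𝒥).iseqv.trans ((collapseCompSetoid X 𝒥).iseqv.symm ha) hb
  exact (collapseCompSetoid X 𝒥).iseqv.trans ha <| hX.collapseCompSetoid_r_of_inInterval h𝒥 hm
    fun J hJ => reachable_deleteEdges_of_collapseCompSetoid h𝒥 hab hJ

theorem collapseCompSetoid_fibre_ne_univ (hX : MedianGraph X) (hne : 𝒥.Nonempty)
    (h𝒥 : ∀ J ∈ 𝒥, IsHyperplane X J) (x : V) :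
    {y | (collapseCompSetoid X 𝒥).r x y} ≠ Set.univ := fun huniv => by
  obtain ⟨J, hJ⟩ := hne
  obtain ⟨a, b, hab, rfl⟩ := (h𝒥 J hJ).exists_eq_edgeHyperplane
  have hsep {y} : (X.deleteEdges (edgeHyperplane X a b)).Reachable x y :=
    reachable_deleteEdges_of_collapseCompSetoid h𝒥 (Set.eq_univ_iff_forall.mp huniv y) hJ
  exact hX.not_reachable_deleteEdges_edgeHyperplane hab (hsep.symm.trans hsep)

end Fibre

/-- For a non-empty collection `𝒥` of hyperplanes of a median graph, each fibre of
the projection to the collapse is exactly the intersection of the halfspaces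
containing the given lift delimited by the hyperplanes of `𝒥`; in particular it is
a proper convex subgraph. -/
theorem stmt8 (X : SimpleGraph V) (hX : MedianGraph X)
    (𝒥 : Set (Set (Sym2 V))) (hne : 𝒥.Nonempty) (h𝒥 : ∀ J ∈ 𝒥, IsHyperplane X J)
    (x : V) :
    ({y : V | (collapseCompSetoid X 𝒥).r x y} =
        ⋂ J ∈ 𝒥, {y : V | (X.deleteEdges J).Reachable x y}) ∧
      IsConvexSet X {y : V | (collapseCompSetoid X 𝒥).r x y} ∧
      {y : V | (collapseCompSetoid X 𝒥).r x y} ≠ Set.univ :=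
  ⟨collapseCompSetoid_fibre_eq X 𝒥 hX h𝒥 x,
    isConvexSet_collapseCompSetoid_fibre X 𝒥 hX h𝒥 x,
    collapseCompSetoid_fibre_ne_univ X 𝒥 hX hne h𝒥 x⟩
end

section
/- Let (X, 𝔠) be a space with characters. Then every connected component of the quasi-cubulation (the graph whose vertices are coherent selectors and whose edges join selectors differing on a single character) is a quasi-median graph, and the distance between two coherent selectors μ and ν in the quasi-cubulation equals the number of characters on which μ and ν disagree (in particular they lie in the same component iff they disagree on only finitely many characters). -/
open SimpleGraph

variable {V : Type*}

variable {X : Type*}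

/-- A character on `X`: a partition of `X` into at least two non-empty clades. -/
def IsCharacter (C : Set (Set X)) : Prop :=
  (∀ c ∈ C, c.Nonempty) ∧ (∀ x : X, ∃! c : Set X, c ∈ C ∧ x ∈ c) ∧
    ∃ c d : Set X, c ∈ C ∧ d ∈ C ∧ c ≠ d

/-- An extension of a clade `c` of the character `C`: the complement of another
clade of `C`. -/
def IsExtensionOf (C : Set (Set X)) (c E : Set X) : Prop :=
  ∃ d ∈ C, d ≠ c ∧ E = dᶜ

/-- A coherent selector: it chooses a clade in each character, and no two chosen
clades admit disjoint extensions. -/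
def CoherentSel (𝔠 : Set (Set (Set X))) (σ : ↥𝔠 → Set X) : Prop :=
  (∀ C : ↥𝔠, σ C ∈ C.val) ∧
    ∀ (C D : ↥𝔠) (E F : Set X), IsExtensionOf C.val (σ C) E →
      IsExtensionOf D.val (σ D) F → (E ∩ F).Nonempty

abbrev CohVert (𝔠 : Set (Set (Set X))) := {σ : ↥𝔠 → Set X // CoherentSel 𝔠 σ}

/-- The quasi-cubulation: vertices are the coherent selectors, and edges join two
selectors differing on exactly one character. -/
def QCGraph (𝔠 : Set (Set (Set X))) : SimpleGraph (CohVert 𝔠) where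
  Adj σ τ := ∃! C : ↥𝔠, σ.val C ≠ τ.val C
  symm := by
    constructor
    rintro σ τ ⟨C, hC, hu⟩
    exact ⟨C, fun h => hC h.symm, fun D hD => hu D fun h => hD h.symm⟩
  loopless := by constructor; rintro σ ⟨C, hC, -⟩; exact hC rfl


/-! The distance in the quasi-cubulation is the Hamming distance between selectors. A walk
changes one character per step, which bounds the distance from below. Conversely, if `σ` and `τ`
disagree on finitely many characters, flipping `σ` at `D` to `τ D` stays coherent as long as no
other disagreeing `E` has `σ D ∪ τ E = X`. A disagreeing `D` with `⊆`-minimal clade `σ D` can be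
blocked only by some `E` with `σ E = σ D` and `τ E = (σ E)ᶜ`; such an `E` is again minimal, and if
it were blocked in turn by `F`, both `E` and `F` would be the character `{σ E, (σ E)ᶜ}`.

Once distances are Hamming distances, the triangle and quadrangle witnesses are obtained by
flipping one character of `x` towards `o`. A common neighbour of `a` and `b` differs from `a` only on
a character separating `a` from `b`: this leaves two common neighbours when `a`, `b` are at
distance two, which excludes induced `K_{2,3}`, and makes any two common neighbours of adjacent
`a`, `b` equal or adjacent, which excludes induced `K₄⁻`. -/

open Function

open Classical in
lemma ncard_eq_ncard_sdiff_singleton_add_ite {α : Type*} {s : Set α} (hs : s.Finite) (a : α) :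
    s.ncard = (s \ {a}).ncard + if a ∈ s then 1 else 0 := by
  split_ifs with h
  · exact (Set.ncard_sdiff_singleton_add_one h hs).symm
  · rw [Set.sdiff_singleton_eq_self h, add_zero]

section Disagreement

variable {α β : Type*}

def disagreement (f g : α → β) : Set α := {a | f a ≠ g a}

variable {f g : α → β} {a : α}

@[simp]
lemma mem_disagreement : a ∈ disagreement f g ↔ f a ≠ g a := Iff.rfl

lemma apply_ne_of_disagreement_eq_singleton (h : disagreement f g = {a}) : f a ≠ g a :=
  mem_disagreement.1 (h ▸ Set.mem_singleton a)

lemma disagreement_comm (f g : α → β) : disagreement f g = disagreement g f :=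
  Set.ext fun _ => ne_comm

lemma disagreement_eq_empty_iff : disagreement f g = ∅ ↔ f = g := by
  simp [disagreement, Set.eq_empty_iff_forall_notMem, funext_iff]

lemma disagreement_nonempty_iff : (disagreement f g).Nonempty ↔ f ≠ g := by
  rw [Set.nonempty_iff_ne_empty, Ne, disagreement_eq_empty_iff]

lemma disagreement_subset_union (f g h : α → β) :
    disagreement f h ⊆ disagreement f g ∪ disagreement g h :=
  fun a ha => (em (f a = g a)).elim (fun hfg => Or.inr fun hgh => ha (hfg.trans hgh)) Or.inl

lemma apply_eq_of_disagreement_subset {b : α} (h : disagreement f g ⊆ {a}) (hb : b ≠ a) :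
    f b = g b :=
  not_not.1 fun hn => hb (h hn)

lemma sdiff_singleton_eq_of_disagreement_subset (hfg : disagreement f g ⊆ {a}) (h : α → β) :
    disagreement h f \ {a} = disagreement h g \ {a} := by
  ext c
  by_cases hc : c = a
  · simp [hc]
  · simp [disagreement, hc, apply_eq_of_disagreement_subset hfg hc]

variable [DecidableEq α]

lemma disagreement_update_self {b : β} (hb : b ≠ f a) : disagreement (update f a b) f = {a} := by
  ext c
  by_cases hc : c = a
  · subst hc; simpa [disagreement] using hb
  · simp [disagreement, hc]

lemma disagreement_update_eq_sdiff (f g : α → β) (a : α) :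
    disagreement (update f a (g a)) g = disagreement f g \ {a} := by
  ext c
  by_cases hc : c = a
  · subst hc; simp [disagreement]
  · simp [disagreement, hc]

end Disagreement

namespace SimpleGraph

variable {G : SimpleGraph V} {μ : V}

lemma reachable_induce_reachable (u v : {ν | G.Reachable μ ν}) :
    (G.induce {ν | G.Reachable μ ν}).Reachable u v := by
  classical
  obtain ⟨p⟩ := u.2.symm.trans v.2
  exact ⟨p.induce {ν | G.Reachable μ ν} fun w hw => u.2.trans (p.takeUntil w hw).reachable⟩

lemma connected_induce_reachable (G : SimpleGraph V) (μ : V) :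
    (G.induce {ν | G.Reachable μ ν}).Connected :=
  (connected_iff_exists_forall_reachable _).2
    ⟨⟨μ, Reachable.refl μ⟩, reachable_induce_reachable _⟩

lemma dist_induce_reachable (u v : {ν | G.Reachable μ ν}) :
    (G.induce {ν | G.Reachable μ ν}).dist u v = G.dist u v := by
  classical
  apply le_antisymm
  · obtain ⟨p, hp⟩ := (u.2.symm.trans v.2).exists_walk_length_eq_dist
    let q := p.induce {ν | G.Reachable μ ν} fun w hw => u.2.trans (p.takeUntil w hw).reachable
    calc _ ≤ q.length := dist_le q
      _ = p.length := by
        rw [← Walk.length_map (Embedding.induce _).toHom]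
        exact congrArg Walk.length (Walk.map_induce p _)
      _ = _ := hp
  · obtain ⟨p, hp⟩ := (reachable_induce_reachable u v).exists_walk_length_eq_dist
    calc _ ≤ (p.map (Embedding.induce _).toHom).length := dist_le _
      _ = _ := by rw [Walk.length_map, hp]

lemma triangleCond_induce_reachable
    (h : ∀ o x y : V, G.Reachable o x → G.Adj x y → G.dist o x = G.dist o y →
      ∃ w : V, G.Adj w x ∧ G.Adj w y ∧ G.dist o w + 1 = G.dist o x) :
    TriangleCond (G.induce {ν | G.Reachable μ ν}) := by
  intro o x y hxy hd
  rw [dist_induce_reachable, dist_induce_reachable] at hd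
  obtain ⟨w, hwx, hwy, hw⟩ := h o x y (o.2.symm.trans x.2) hxy hd
  exact ⟨⟨w, x.2.trans hwx.symm.reachable⟩, hwx, hwy, by
    rwa [dist_induce_reachable, dist_induce_reachable]⟩

lemma quadCond_induce_reachable
    (h : ∀ o x y z : V, G.Reachable o z → G.Adj z x → G.Adj z y → G.dist x y = 2 →
      G.dist o z = G.dist o x + 1 → G.dist o z = G.dist o y + 1 →
      ∃ w : V, G.Adj w x ∧ G.Adj w y ∧ G.dist o w + 2 = G.dist o z) :
    QuadCond (G.induce {ν | G.Reachable μ ν}) := by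
  intro o x y z hzx hzy hxy h1 h2
  simp only [dist_induce_reachable] at hxy h1 h2
  obtain ⟨w, hwx, hwy, hw⟩ := h o x y z (o.2.symm.trans z.2) hzx hzy hxy h1 h2
  exact ⟨⟨w, x.2.trans hwx.symm.reachable⟩, hwx, hwy, by
    rwa [dist_induce_reachable, dist_induce_reachable]⟩

lemma NoInducedK23.induce (h : NoInducedK23 G) (s : Set V) : NoInducedK23 (G.induce s) := by
  rintro ⟨a, b, x, y, z, hab, hxy, hyz, hxz, hadj⟩
  exact h ⟨a, b, x, y, z, Subtype.coe_ne_coe.2 hab, Subtype.coe_ne_coe.2 hxy,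
    Subtype.coe_ne_coe.2 hyz, Subtype.coe_ne_coe.2 hxz, hadj⟩

lemma NoInducedK4minus.induce (h : NoInducedK4minus G) (s : Set V) :
    NoInducedK4minus (G.induce s) := by
  rintro ⟨a, b, c, d, hab, hac, had, hbc, hbd, hcd, hncd⟩
  exact h ⟨a, b, c, d, hab, hac, had, hbc, hbd, Subtype.coe_ne_coe.2 hcd, hncd⟩

end SimpleGraph

namespace IsCharacter

variable {C : Set (Set X)} {c d : Set X}

lemma eq_of_mem_of_mem (hC : IsCharacter C) (hc : c ∈ C) (hd : d ∈ C) {x : X} (hxc : x ∈ c)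
    (hxd : x ∈ d) : c = d :=
  (hC.2.1 x).unique ⟨hc, hxc⟩ ⟨hd, hxd⟩

lemma subset_compl_of_ne (hC : IsCharacter C) (hc : c ∈ C) (hd : d ∈ C) (hne : c ≠ d) :
    d ⊆ cᶜ :=
  fun _ hxd hxc => hne (hC.eq_of_mem_of_mem hc hd hxc hxd)

lemma eq_pair_of_compl_mem (hC : IsCharacter C) (hc : c ∈ C) (hc' : cᶜ ∈ C) : C = {c, cᶜ} := by
  refine Set.Subset.antisymm (fun d hd => ?_)
    (Set.insert_subset hc (Set.singleton_subset_iff.2 hc'))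
  obtain ⟨x, hx⟩ := hC.1 d hd
  by_cases hxc : x ∈ c
  · exact Or.inl (hC.eq_of_mem_of_mem hd hc hx hxc)
  · exact Or.inr (hC.eq_of_mem_of_mem hd hc' hx hxc)

end IsCharacter

namespace CoherentSel

variable {𝔠 : Set (Set (Set X))} {σ τ ρ : ↥𝔠 → Set X}

lemma compl_inter_compl_nonempty (hσ : CoherentSel 𝔠 σ) {C D : ↥𝔠} {c d : Set X}
    (hc : c ∈ C.val) (hcσ : c ≠ σ C) (hd : d ∈ D.val) (hdσ : d ≠ σ D) : (cᶜ ∩ dᶜ).Nonempty :=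
  hσ.2 C D _ _ ⟨c, hc, hcσ, rfl⟩ ⟨d, hd, hdσ, rfl⟩

lemma exists_free (h𝔠 : ∀ C ∈ 𝔠, IsCharacter C)
    (hσ : CoherentSel 𝔠 σ) (hτ : CoherentSel 𝔠 τ)
    (hfin : (disagreement σ τ).Finite) (hne : (disagreement σ τ).Nonempty) :
    ∃ D, σ D ≠ τ D ∧ ∀ E ≠ D, τ E ≠ σ E → ((σ D)ᶜ ∩ (τ E)ᶜ).Nonempty := by
  set S := disagreement σ τ
  have blocked : ∀ D, MinimalFor (· ∈ S) σ D → ∀ E, τ E ≠ σ E →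
      ¬ ((σ D)ᶜ ∩ (τ E)ᶜ).Nonempty → MinimalFor (· ∈ S) σ E ∧ σ E = σ D ∧ τ E = (σ E)ᶜ := by
    intro D hD E hτσ hempty
    have hτE : τ E ⊆ (σ E)ᶜ := (h𝔠 _ E.2).subset_compl_of_ne (hσ.1 E) (hτ.1 E) hτσ.symm
    have hστ : (σ D)ᶜ ⊆ τ E := fun x hx => by_contra fun hx' => hempty ⟨x, hx, hx'⟩
    have hσE : σ E = σ D := by
      have hle : σ E ⊆ σ D := Set.compl_subset_compl.1 (hστ.trans hτE)
      exact hle.antisymm (hD.2 hτσ.symm hle)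
    refine ⟨⟨hτσ.symm, fun j hj hle => ?_⟩, hσE, hτE.antisymm (hσE ▸ hστ)⟩
    rw [hσE] at hle ⊢
    exact hD.2 hj hle
  obtain ⟨D, hD⟩ := hfin.exists_minimalFor σ S hne
  by_contra! hcon
  obtain ⟨E, hED, hE, hDE⟩ := hcon D hD.1
  obtain ⟨hEmin, -, hτE⟩ := blocked D hD E hE (Set.not_nonempty_iff_eq_empty.2 hDE)
  obtain ⟨F, hFE, hF, hEF⟩ := hcon E hEmin.1
  obtain ⟨-, hσF, hτF⟩ := blocked E hEmin F hF (Set.not_nonempty_iff_eq_empty.2 hEF)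
  refine hFE (Subtype.ext ?_)
  rw [(h𝔠 _ F.2).eq_pair_of_compl_mem (hσ.1 F) (hτF ▸ hτ.1 F),
    (h𝔠 _ E.2).eq_pair_of_compl_mem (hσ.1 E) (hτE ▸ hτ.1 E), hσF]

variable [DecidableEq ↥𝔠]

lemma update (hσ : CoherentSel 𝔠 σ) (hτ : CoherentSel 𝔠 τ) (D : ↥𝔠)
    (hfree : ∀ E ≠ D, τ E ≠ σ E → ((σ D)ᶜ ∩ (τ E)ᶜ).Nonempty) :
    CoherentSel 𝔠 (Function.update σ D (τ D)) := by
  have mixed : ∀ {E : ↥𝔠} {c d : Set X}, E ≠ D → c ∈ D.val → c ≠ τ D → d ∈ E.val →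
      d ≠ σ E → (cᶜ ∩ dᶜ).Nonempty := by
    intro E c d hE hc hcτ hd hdσ
    by_cases hdτ : d = τ E
    · by_cases hcσ : c = σ D
      · subst hcσ hdτ
        exact hfree E hE hdσ
      · exact hσ.compl_inter_compl_nonempty hc hcσ hd hdσ
    · exact hτ.compl_inter_compl_nonempty hc hcτ hd hdτ
  refine ⟨fun E => ?_, ?_⟩
  · by_cases hE : E = D
    · subst hE; rw [update_self]; exact hτ.1 E
    · rw [update_of_ne hE]; exact hσ.1 E
  rintro C E _ _ ⟨c, hc, hcne, rfl⟩ ⟨d, hd, hdne, rfl⟩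
  by_cases hC : C = D <;> by_cases hE : E = D
  · subst hC hE
    rw [update_self] at hcne hdne
    exact hτ.compl_inter_compl_nonempty hc hcne hd hdne
  · subst hC
    rw [update_self] at hcne
    rw [update_of_ne hE] at hdne
    exact mixed hE hc hcne hd hdne
  · subst hE
    rw [update_self] at hdne
    rw [update_of_ne hC] at hcne
    rw [Set.inter_comm]
    exact mixed hC hd hdne hc hcne
  · rw [update_of_ne hC] at hcne
    rw [update_of_ne hE] at hdne
    exact hσ.compl_inter_compl_nonempty hc hcne hd hdne

lemma update_of_witness (hσ : CoherentSel 𝔠 σ) (hτ : CoherentSel 𝔠 τ) (hρ : CoherentSel 𝔠 ρ)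
    {D : ↥𝔠} (hD : σ D ≠ ρ D) (hE : ∀ E ≠ D, τ E ≠ σ E → τ E ≠ ρ E) :
    CoherentSel 𝔠 (Function.update σ D (τ D)) :=
  hσ.update hτ D fun E hED hτσ =>
    hρ.compl_inter_compl_nonempty (hσ.1 D) hD (hτ.1 E) (hE E hED hτσ)

end CoherentSel

namespace QCGraph

variable {𝔠 : Set (Set (Set X))} {σ τ : CohVert 𝔠}

lemma adj_iff : (QCGraph 𝔠).Adj σ τ ↔ ∃ C, disagreement σ.val τ.val = {C} :=
  exists_congr fun _ => (Set.eq_singleton_iff_unique_mem (s := disagreement σ.val τ.val)).symm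

lemma adj_of_disagreement_subset {C : ↥𝔠} (h : disagreement σ.val τ.val ⊆ {C})
    (hC : σ.val C ≠ τ.val C) : (QCGraph 𝔠).Adj σ τ :=
  adj_iff.2 ⟨C, h.antisymm (Set.singleton_subset_iff.2 hC)⟩

lemma exists_disagreement_subset_insert {ρ : CohVert 𝔠} (h : (QCGraph 𝔠).Adj σ ρ) (τ : CohVert 𝔠) :
    ∃ C, disagreement σ.val τ.val ⊆ insert C (disagreement ρ.val τ.val) := by
  obtain ⟨C, hC⟩ := adj_iff.1 h
  refine ⟨C, ?_⟩
  rw [← Set.singleton_union, ← hC]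
  exact disagreement_subset_union σ.val ρ.val τ.val

lemma finite_disagreement_of_walk :
    ∀ {σ τ : CohVert 𝔠}, (QCGraph 𝔠).Walk σ τ → (disagreement σ.val τ.val).Finite
  | _, _, .nil => by simp [disagreement]
  | _, τ, .cons h p => by
    obtain ⟨C, hC⟩ := exists_disagreement_subset_insert h τ
    exact ((finite_disagreement_of_walk p).insert C).subset hC

lemma ncard_disagreement_le_length :
    ∀ {σ τ : CohVert 𝔠} (w : (QCGraph 𝔠).Walk σ τ), (disagreement σ.val τ.val).ncard ≤ w.length
  | _, _, .nil => by simp [disagreement]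
  | _, τ, .cons h p => by
    obtain ⟨C, hC⟩ := exists_disagreement_subset_insert h τ
    calc _ ≤ (insert C (disagreement _ τ.val)).ncard :=
          Set.ncard_le_ncard hC ((finite_disagreement_of_walk p).insert C)
      _ ≤ (disagreement _ τ.val).ncard + 1 := Set.ncard_insert_le _ _
      _ ≤ (Walk.cons h p).length := Nat.succ_le_succ (ncard_disagreement_le_length p)

lemma exists_walk_length_eq_ncard (h𝔠 : ∀ C ∈ 𝔠, IsCharacter C) :
    ∀ (n : ℕ) (σ τ : CohVert 𝔠), (disagreement σ.val τ.val).Finite →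
      (disagreement σ.val τ.val).ncard = n → ∃ w : (QCGraph 𝔠).Walk σ τ, w.length = n
  | 0, σ, τ, hfin, hn => by
    obtain rfl : σ = τ :=
      Subtype.ext (disagreement_eq_empty_iff.1 ((Set.ncard_eq_zero hfin).1 hn))
    exact ⟨.nil, rfl⟩
  | n + 1, σ, τ, hfin, hn => by
    classical
    obtain ⟨D, hD, hfree⟩ :=
      CoherentSel.exists_free h𝔠 σ.2 τ.2 hfin (Set.nonempty_of_ncard_ne_zero (by omega))
    let σ' : CohVert 𝔠 := ⟨Function.update σ.val D (τ.val D), σ.2.update τ.2 D hfree⟩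
    have hσσ' : (QCGraph 𝔠).Adj σ σ' := (adj_iff.2 ⟨D, disagreement_update_self hD.symm⟩).symm
    have hσ'τ : disagreement σ'.val τ.val = disagreement σ.val τ.val \ {D} :=
      disagreement_update_eq_sdiff _ _ _
    have hn' : (disagreement σ'.val τ.val).ncard = n := by
      have := Set.ncard_sdiff_singleton_add_one hD hfin
      rw [hσ'τ]; omega
    obtain ⟨p, hp⟩ := exists_walk_length_eq_ncard h𝔠 n σ' τ (hσ'τ ▸ hfin.sdiff) hn'
    exact ⟨.cons hσσ' p, by rw [Walk.length_cons, hp]⟩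

lemma reachable_iff (h𝔠 : ∀ C ∈ 𝔠, IsCharacter C) :
    (QCGraph 𝔠).Reachable σ τ ↔ (disagreement σ.val τ.val).Finite :=
  ⟨fun ⟨w⟩ => finite_disagreement_of_walk w,
    fun hfin => (exists_walk_length_eq_ncard h𝔠 _ σ τ hfin rfl).elim fun w _ => ⟨w⟩⟩

lemma dist_eq (h𝔠 : ∀ C ∈ 𝔠, IsCharacter C) (h : (QCGraph 𝔠).Reachable σ τ) :
    (QCGraph 𝔠).dist σ τ = (disagreement σ.val τ.val).ncard := by
  obtain ⟨w, hw⟩ := exists_walk_length_eq_ncard h𝔠 _ σ τ ((reachable_iff h𝔠).1 h) rfl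
  obtain ⟨p, hp⟩ := h.exists_walk_length_eq_dist
  exact (hw ▸ dist_le w).antisymm (hp ▸ ncard_disagreement_le_length p)

open Classical in
lemma dist_add_ite_eq_of_adj (h𝔠 : ∀ C ∈ 𝔠, IsCharacter C) {o x y : CohVert 𝔠} {C : ↥𝔠}
    (hox : (QCGraph 𝔠).Reachable o x) (hC : disagreement x.val y.val = {C}) :
    (QCGraph 𝔠).dist o x + (if C ∈ disagreement o.val y.val then 1 else 0) =
      (QCGraph 𝔠).dist o y + (if C ∈ disagreement o.val x.val then 1 else 0) := by
  have hoy := hox.trans (adj_iff.2 ⟨C, hC⟩).reachable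
  have hx := ncard_eq_ncard_sdiff_singleton_add_ite ((reachable_iff h𝔠).1 hox) C
  have hy := ncard_eq_ncard_sdiff_singleton_add_ite ((reachable_iff h𝔠).1 hoy) C
  rw [sdiff_singleton_eq_of_disagreement_subset hC.subset] at hx
  rw [dist_eq h𝔠 hox, dist_eq h𝔠 hoy]
  omega

lemma apply_eq_of_dist_eq_add_one (h𝔠 : ∀ C ∈ 𝔠, IsCharacter C) {o x y : CohVert 𝔠} {C : ↥𝔠}
    (hox : (QCGraph 𝔠).Reachable o x) (hC : disagreement x.val y.val = {C})
    (hd : (QCGraph 𝔠).dist o x = (QCGraph 𝔠).dist o y + 1) : o.val C = y.val C := by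
  have key := dist_add_ite_eq_of_adj h𝔠 hox hC
  by_contra hne
  rw [if_pos (mem_disagreement.2 hne)] at key
  split_ifs at key <;> omega

lemma triangleCond_of_reachable (h𝔠 : ∀ C ∈ 𝔠, IsCharacter C) {o x y : CohVert 𝔠}
    (hox : (QCGraph 𝔠).Reachable o x) (hxy : (QCGraph 𝔠).Adj x y)
    (hd : (QCGraph 𝔠).dist o x = (QCGraph 𝔠).dist o y) :
    ∃ w, (QCGraph 𝔠).Adj w x ∧ (QCGraph 𝔠).Adj w y ∧
      (QCGraph 𝔠).dist o w + 1 = (QCGraph 𝔠).dist o x := by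
  classical
  obtain ⟨C, hC⟩ := adj_iff.1 hxy
  have hxyC : x.val C ≠ y.val C := apply_ne_of_disagreement_eq_singleton hC
  have hxyE : ∀ E ≠ C, x.val E = y.val E := fun E hE => apply_eq_of_disagreement_subset hC.subset hE
  have hoC : o.val C ≠ x.val C ∧ o.val C ≠ y.val C := by
    have key := dist_add_ite_eq_of_adj h𝔠 hox hC
    by_cases hx : C ∈ disagreement o.val x.val <;> by_cases hy : C ∈ disagreement o.val y.val
    · exact ⟨hx, hy⟩
    · rw [if_pos hx, if_neg hy] at key; omega
    · rw [if_neg hx, if_pos hy] at key; omega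
    · exact absurd ((not_not.1 hx).symm.trans (not_not.1 hy)) hxyC
  let w : CohVert 𝔠 := ⟨Function.update x.val C (o.val C),
    x.2.update_of_witness o.2 y.2 hxyC fun E hE hoxE => hxyE E hE ▸ hoxE⟩
  have hwx : (QCGraph 𝔠).Adj w x := adj_iff.2 ⟨C, disagreement_update_self hoC.1⟩
  refine ⟨w, hwx, adj_of_disagreement_subset (C := C) ?_ ?_, ?_⟩
  · intro E hE
    by_contra hEC
    exact hE (by simp [w, update_of_ne hEC, hxyE E hEC])
  · simpa [w] using hoC.2
  · rw [dist_eq h𝔠 (hox.trans hwx.symm.reachable), dist_eq h𝔠 hox, disagreement_comm o.val w.val,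
      disagreement_comm o.val x.val, disagreement_update_eq_sdiff]
    exact Set.ncard_sdiff_singleton_add_one hoC.1.symm ((reachable_iff h𝔠).1 hox.symm)

lemma quadCond_of_reachable (h𝔠 : ∀ C ∈ 𝔠, IsCharacter C) {o x y z : CohVert 𝔠}
    (hoz : (QCGraph 𝔠).Reachable o z) (hzx : (QCGraph 𝔠).Adj z x) (hzy : (QCGraph 𝔠).Adj z y)
    (hxy : (QCGraph 𝔠).dist x y = 2)
    (hx : (QCGraph 𝔠).dist o z = (QCGraph 𝔠).dist o x + 1)
    (hy : (QCGraph 𝔠).dist o z = (QCGraph 𝔠).dist o y + 1) :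
    ∃ w, (QCGraph 𝔠).Adj w x ∧ (QCGraph 𝔠).Adj w y ∧
      (QCGraph 𝔠).dist o w + 2 = (QCGraph 𝔠).dist o z := by
  classical
  obtain ⟨C, hC⟩ := adj_iff.1 hzx
  obtain ⟨D, hD⟩ := adj_iff.1 hzy
  have hzxE : ∀ E ≠ C, z.val E = x.val E := fun E hE => apply_eq_of_disagreement_subset hC.subset hE
  have hzyE : ∀ E ≠ D, z.val E = y.val E := fun E hE => apply_eq_of_disagreement_subset hD.subset hE
  have hzxC : z.val C ≠ x.val C := apply_ne_of_disagreement_eq_singleton hC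
  have hzyD : z.val D ≠ y.val D := apply_ne_of_disagreement_eq_singleton hD
  have hCD : C ≠ D := by
    rintro rfl
    have hsub : disagreement x.val y.val ⊆ {C} := by
      have := disagreement_subset_union x.val z.val y.val
      rwa [disagreement_comm x.val z.val, hC, hD, Set.union_self] at this
    have := Set.ncard_le_ncard hsub
    rw [Set.ncard_singleton, ← dist_eq h𝔠 (hzx.reachable.symm.trans hzy.reachable), hxy] at this
    omega
  have hoxC : o.val C = x.val C := apply_eq_of_dist_eq_add_one h𝔠 hoz hC hx
  have hoyD : o.val D = y.val D := apply_eq_of_dist_eq_add_one h𝔠 hoz hD hy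
  have hxyD : x.val D ≠ y.val D := hzxE D hCD.symm ▸ hzyD
  let w : CohVert 𝔠 := ⟨Function.update x.val D (o.val D),
    x.2.update_of_witness o.2 y.2 hxyD fun E hED hoxE => by
      have hEC : E ≠ C := by rintro rfl; exact hoxE hoxC
      rwa [← hzyE E hED, hzxE E hEC]⟩
  have hwx : (QCGraph 𝔠).Adj w x := adj_iff.2 ⟨D, disagreement_update_self (hoyD ▸ hxyD.symm)⟩
  refine ⟨w, hwx, adj_of_disagreement_subset (C := C) ?_ ?_, ?_⟩
  · intro E hE
    by_contra hEC
    by_cases hED : E = D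
    · subst hED
      exact hE (by simp [w, hoyD])
    · exact hE (by simp [w, update_of_ne hED, ← hzxE E hEC, hzyE E hED])
  · simpa [w, update_of_ne hCD, ← hzyE C hCD] using hzxC.symm
  · have hox := hoz.trans hzx.reachable
    have hDx : D ∈ disagreement x.val o.val := mem_disagreement.2 (hoyD ▸ hxyD)
    have := Set.ncard_sdiff_singleton_add_one hDx ((reachable_iff h𝔠).1 hox.symm)
    rw [hx, dist_eq h𝔠 (hox.trans hwx.symm.reachable), dist_eq h𝔠 hox,
      disagreement_comm o.val w.val, disagreement_comm o.val x.val, disagreement_update_eq_sdiff]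
    omega

lemma disagreement_subset_of_adj_of_adj {a b c : CohVert 𝔠} {C : ↥𝔠}
    (hC : disagreement a.val b.val = {C}) (hac : (QCGraph 𝔠).Adj a c)
    (hbc : (QCGraph 𝔠).Adj b c) : disagreement c.val a.val ⊆ {C} := by
  obtain ⟨C₁, hC₁⟩ := adj_iff.1 hac
  obtain ⟨C₂, hC₂⟩ := adj_iff.1 hbc
  suffices C₁ = C by rw [disagreement_comm, hC₁, this]
  by_contra hne
  have habC₁ := apply_eq_of_disagreement_subset hC.subset hne
  have hC₁₂ : C₁ ∈ disagreement b.val c.val := by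
    rw [mem_disagreement, ← habC₁]
    exact apply_ne_of_disagreement_eq_singleton hC₁
  rw [hC₂] at hC₁₂
  have hCmem : C ∈ disagreement a.val c.val ∪ disagreement c.val b.val :=
    disagreement_subset_union _ _ _ (hC.symm ▸ Set.mem_singleton C)
  rw [hC₁, disagreement_comm, hC₂, ← hC₁₂, Set.union_self] at hCmem
  exact hne hCmem.symm

lemma noInducedK4minus : NoInducedK4minus (QCGraph 𝔠) := by
  rintro ⟨a, b, c, d, hab, hac, had, hbc, hbd, hcd, hncd⟩
  obtain ⟨C, hC⟩ := adj_iff.1 hab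
  have hsub : disagreement c.val d.val ⊆ {C} := by
    have := disagreement_subset_union c.val a.val d.val
    rw [disagreement_comm a.val] at this
    exact this.trans (Set.union_subset (disagreement_subset_of_adj_of_adj hC hac hbc)
      (disagreement_subset_of_adj_of_adj hC had hbd))
  obtain ⟨E, hE⟩ := disagreement_nonempty_iff.2 fun h => hcd (Subtype.ext h)
  obtain rfl := hsub hE
  exact hncd (adj_of_disagreement_subset hsub hE)

lemma exists_eq_update_of_adj_of_adj [DecidableEq ↥𝔠] {a b v : CohVert 𝔠} (hne : a ≠ b)
    (hnab : ¬ (QCGraph 𝔠).Adj a b) (hav : (QCGraph 𝔠).Adj a v) (hbv : (QCGraph 𝔠).Adj b v) :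
    ∃ P Q, P ∈ disagreement a.val b.val ∧ disagreement a.val b.val ⊆ {P, Q} ∧
      v.val = Function.update a.val P (b.val P) := by
  obtain ⟨P, hP⟩ := adj_iff.1 hav
  obtain ⟨Q, hQ⟩ := adj_iff.1 hbv
  have hsub : disagreement a.val b.val ⊆ {P, Q} := by
    rw [← Set.singleton_union, ← hP, ← hQ, disagreement_comm b.val]
    exact disagreement_subset_union _ _ _
  obtain ⟨E, hE⟩ := disagreement_nonempty_iff.2 fun h => hne (Subtype.ext h)
  have hPQ : P ≠ Q := by
    rintro rfl
    rw [Set.pair_eq_singleton] at hsub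
    obtain rfl := hsub hE
    exact hnab (adj_of_disagreement_subset hsub hE)
  have hvP : v.val P = b.val P := (apply_eq_of_disagreement_subset (hQ.symm ▸ subset_rfl) hPQ).symm
  refine ⟨P, Q, ?_, hsub, funext fun E => ?_⟩
  · rw [mem_disagreement, ← hvP]
    exact apply_ne_of_disagreement_eq_singleton hP
  · by_cases hEP : E = P
    · subst hEP; rw [update_self, hvP]
    · rw [update_of_ne hEP, apply_eq_of_disagreement_subset hP.subset hEP]

lemma noInducedK23 : NoInducedK23 (QCGraph 𝔠) := by
  classical
  rintro ⟨a, b, x, y, z, hab, hxy, hyz, hxz, hax, hay, haz, hbx, hby, hbz, hnab, -⟩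
  obtain ⟨Px, Qx, -, hsub, hx⟩ := exists_eq_update_of_adj_of_adj hab hnab hax hbx
  obtain ⟨Py, -, hPy, -, hy⟩ := exists_eq_update_of_adj_of_adj hab hnab hay hby
  obtain ⟨Pz, -, hPz, -, hz⟩ := exists_eq_update_of_adj_of_adj hab hnab haz hbz
  rcases hsub hPy with rfl | rfl <;> rcases hsub hPz with rfl | rfl
  · exact hxy (Subtype.ext (hx.trans hy.symm))
  · exact hxy (Subtype.ext (hx.trans hy.symm))
  · exact hxz (Subtype.ext (hx.trans hz.symm))
  · exact hyz (Subtype.ext (hy.trans hz.symm))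

lemma quasiMedian_induce_reachable (h𝔠 : ∀ C ∈ 𝔠, IsCharacter C) (μ : CohVert 𝔠) :
    QuasiMedian ((QCGraph 𝔠).induce {ν | (QCGraph 𝔠).Reachable μ ν}) :=
  ⟨connected_induce_reachable _ μ,
    triangleCond_induce_reachable fun _ _ _ => triangleCond_of_reachable h𝔠,
    quadCond_induce_reachable fun _ _ _ _ => quadCond_of_reachable h𝔠,
    noInducedK23.induce _, noInducedK4minus.induce _⟩

end QCGraph

/-- Every connected component of the quasi-cubulation of a space with characters is
a quasi-median graph, and the distance between coherent selectors is the number of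
characters on which they disagree; in particular two coherent selectors lie in the
same component iff they disagree on only finitely many characters. -/
theorem stmt18 (𝔠 : Set (Set (Set X))) (h𝔠 : ∀ C ∈ 𝔠, IsCharacter C) :
    (∀ μ ν : CohVert 𝔠, (QCGraph 𝔠).Reachable μ ν ↔
        {C : ↥𝔠 | μ.val C ≠ ν.val C}.Finite) ∧
      (∀ μ ν : CohVert 𝔠, (QCGraph 𝔠).Reachable μ ν →
        (QCGraph 𝔠).dist μ ν = {C : ↥𝔠 | μ.val C ≠ ν.val C}.ncard) ∧
      (∀ μ : CohVert 𝔠,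
        QuasiMedian ((QCGraph 𝔠).induce {ν | (QCGraph 𝔠).Reachable μ ν})) :=
  ⟨fun _ _ => QCGraph.reachable_iff h𝔠, fun _ _ => QCGraph.dist_eq h𝔠,
    QCGraph.quasiMedian_induce_reachable h𝔠⟩
end
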